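/- arXiv:2512.24546 — 7 statements merged into one kernel-verified Lean document; each statement's English description precedes it below -/
import Mathlib

section
/- Let p be a prime, m, n ≥ 1, and let k₁, k₂ be natural numbers satisfying k₁^{p^n} ≡ 1 (mod p^m) and k₂^{p^n} ≡ 1 (mod p^m). Then the groups G(p,m,n,k₁) and G(p,m,n,k₂) are isomorphic (i.e. Nonempty (G(p,m,n,k₁) ≃* G(p,m,n,k₂))) if and only if there exists a natural number v with p ∤ v such that k₂ ≡ k₁^v (mod p^m). -/
/-- The group `AddAut A` is isomorphic to `MulAut (Multiplicative A)`. -/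
def addAutMulEquiv (A : Type*) [AddGroup A] :
    Multiplicative (AddAut A) ≃* MulAut (Multiplicative A) :=
  { AddEquiv.toMultiplicative with
    map_mul' := fun _ _ => rfl }

/-- The homomorphism `φ_k : Multiplicative (ZMod (p^n)) →* MulAut (Multiplicative (ZMod (p^m)))`
sending `Multiplicative.ofAdd 1` to the automorphism `x ↦ k • x` of `ZMod (p^m)`. -/
noncomputable def metaPhi (p m n k : ℕ) (hp : p.Prime)
    (hk : (k : ZMod (p ^ m)) ^ (p ^ n) = 1) :
    Multiplicative (ZMod (p ^ n)) →* MulAut (Multiplicative (ZMod (p ^ m))) :=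
  AddMonoidHom.toMultiplicativeLeft
    (ZMod.lift (p ^ n)
      ⟨zmultiplesHom (Additive (MulAut (Multiplicative (ZMod (p ^ m)))))
          (Additive.ofMul
            (((addAutMulEquiv (ZMod (p ^ m))).toMonoidHom.comp
                (DistribMulAction.toAddAut (ZMod (p ^ m))ˣ (ZMod (p ^ m))))
              (IsUnit.of_pow_eq_one hk (pow_ne_zero n hp.ne_zero)).unit)),
        by
          set J := ((addAutMulEquiv (ZMod (p ^ m))).toMonoidHom.comp
              (DistribMulAction.toAddAut (ZMod (p ^ m))ˣ (ZMod (p ^ m))))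
          set u := (IsUnit.of_pow_eq_one hk (pow_ne_zero n hp.ne_zero)).unit
          have hu : u ^ (p ^ n) = 1 := by
            ext
            push_cast
            rw [IsUnit.unit_spec]
            exact hk
          rw [zmultiplesHom_apply, natCast_zsmul, ← ofMul_pow, ← map_pow, hu,
            map_one, ofMul_one]⟩)

/-- The split metacyclic group `G(p,m,n,k)`. -/
noncomputable abbrev metaG (p m n k : ℕ) (hp : p.Prime)
    (hk : (k : ZMod (p ^ m)) ^ (p ^ n) = 1) : Type :=
  Multiplicative (ZMod (p ^ m)) ⋊[metaPhi p m n k hp hk] Multiplicative (ZMod (p ^ n))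

/-- The number of subgroups of order `N` of `G`. -/
noncomputable def subCount (G : Type*) [Group G] (N : ℕ) : ℕ :=
  Nat.card {H : Subgroup G // Nat.card H = N}


section GeneralGroup

variable {G : Type*} [Group G]

lemma conj_pow_nat (s x : G) (e : ℕ) : s * x ^ e * s⁻¹ = (s * x * s⁻¹) ^ e := by
  induction e with
  | zero => simp
  | succ e ih => rw [pow_succ, pow_succ, ← ih]; group

lemma conj_pow_int (s x : G) (i : ℤ) : s * x ^ i * s⁻¹ = (s * x * s⁻¹) ^ i := by
  have := map_zpow (MulAut.conj s) x i
  simpa [MulAut.conj_apply] using this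

lemma conj_pow_of_closure (g t : G) (k₁ L : ℕ) (hL1 : 1 ≤ L)
    (hgL : g ^ (k₁ ^ L) = g) (hrel : t * g * t⁻¹ = g ^ k₁)
    (hc : Subgroup.closure {g, t} = ⊤) (c : G) :
    ∃ e : ℕ, c * g * c⁻¹ = g ^ (k₁ ^ e) := by
  have hgLe : ∀ e : ℕ, g ^ (k₁ ^ L) ^ e = g := by
    intro e
    induction e with
    | zero => simp
    | succ e ih => rw [pow_succ, pow_mul, ih, hgL]
  let S : Subgroup G :=
    { carrier := {c | ∃ e : ℕ, c * g * c⁻¹ = g ^ (k₁ ^ e)}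
      one_mem' := ⟨0, by simp⟩
      mul_mem' := by
        rintro c₁ c₂ ⟨e₁, h₁⟩ ⟨e₂, h₂⟩
        refine ⟨e₁ + e₂, ?_⟩
        have h3 : (c₁ * c₂) * g * (c₁ * c₂)⁻¹ = c₁ * (c₂ * g * c₂⁻¹) * c₁⁻¹ := by
          group
        rw [h3, h₂, conj_pow_nat, h₁, ← pow_mul, ← pow_add]
      inv_mem' := by
        rintro c ⟨e, h⟩
        refine ⟨e * (L - 1), ?_⟩
        have key : c * (g ^ (k₁ ^ (e * (L - 1)))) * c⁻¹ = g := by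
          obtain ⟨L', rfl⟩ : ∃ L', L = L' + 1 := ⟨L - 1, by omega⟩
          rw [conj_pow_nat, h, ← pow_mul, ← pow_add, Nat.add_sub_cancel,
            show e + e * L' = (L' + 1) * e from by ring, pow_mul, hgLe]
        calc c⁻¹ * g * c⁻¹⁻¹ = c⁻¹ * (c * (g ^ (k₁ ^ (e * (L - 1)))) * c⁻¹) * c⁻¹⁻¹ := by
              rw [key]
          _ = g ^ (k₁ ^ (e * (L - 1))) := by group }
  have hS : Subgroup.closure {g, t} ≤ S := by
    rw [Subgroup.closure_le]
    rintro w (rfl | rfl)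
    · exact ⟨0, by simp⟩
    · exact ⟨1, by simpa [pow_one] using hrel⟩
  exact hS (by rw [hc]; trivial : c ∈ Subgroup.closure {g, t})

lemma zpowers_normal_of (g t : G) (k₁ L : ℕ) (hL1 : 1 ≤ L)
    (hgL : g ^ (k₁ ^ L) = g) (hrel : t * g * t⁻¹ = g ^ k₁)
    (hc : Subgroup.closure {g, t} = ⊤) : (Subgroup.zpowers g).Normal := by
  obtain ⟨L', rfl⟩ : ∃ L', L = L' + 1 := ⟨L - 1, by omega⟩
  rw [← Subgroup.normalizer_eq_top_iff, eq_top_iff, ← hc, Subgroup.closure_le]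
  have ht' : t⁻¹ * g * t = g ^ (k₁ ^ L') := by
    have h0 : t⁻¹ * g ^ k₁ * t = g := by
      rw [← hrel]; group
    have h1 : g = g ^ (k₁ * k₁ ^ L') := by
      nth_rewrite 1 [← hgL]
      congr 1
      rw [pow_succ, mul_comm]
    calc t⁻¹ * g * t = t⁻¹ * g ^ (k₁ * k₁ ^ L') * t := by rw [← h1]
      _ = t⁻¹ * (g ^ k₁) ^ (k₁ ^ L') * t := by rw [pow_mul]
      _ = t⁻¹ * (g ^ k₁) ^ (k₁ ^ L') * t⁻¹⁻¹ := by rw [inv_inv]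
      _ = (t⁻¹ * g ^ k₁ * t⁻¹⁻¹) ^ (k₁ ^ L') := by rw [conj_pow_nat]
      _ = g ^ (k₁ ^ L') := by rw [inv_inv, h0]
  have hgmem : g ∈ Subgroup.normalizer (Subgroup.zpowers g : Set G) :=
    Subgroup.le_normalizer (Subgroup.mem_zpowers g)
  have htmem : t ∈ Subgroup.normalizer (Subgroup.zpowers g : Set G) := by
    rw [Subgroup.mem_normalizer_iff]
    intro h
    constructor
    · intro hh
      obtain ⟨i, hi⟩ := Subgroup.mem_zpowers_iff.mp hh
      rw [← hi, conj_pow_int, hrel]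
      exact Subgroup.zpow_mem _ (Subgroup.pow_mem _ (Subgroup.mem_zpowers _) _) i
    · intro hh
      obtain ⟨i, hi⟩ := Subgroup.mem_zpowers_iff.mp hh
      have h2 : h = t⁻¹ * (g ^ i) * t⁻¹⁻¹ := by rw [inv_inv, hi]; group
      rw [h2, conj_pow_int, inv_inv, ht']
      exact Subgroup.zpow_mem _ (Subgroup.pow_mem _ (Subgroup.mem_zpowers _) _) i
  rintro w hw
  rcases hw with h | h
  · subst h; exact hgmem
  · subst h; exact htmem

lemma commutator_mem_zpowers (g t : G) (hN : (Subgroup.zpowers g).Normal)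
    (hc : Subgroup.closure {g, t} = ⊤) (u v : G) :
    (u * v) * (v * u)⁻¹ ∈ Subgroup.zpowers g := by
  haveI := hN
  set N := Subgroup.zpowers g
  let π := QuotientGroup.mk' N
  have hπ : ∀ w : G, ∃ i : ℤ, π w = (π t) ^ i := by
    intro w
    have hw : w ∈ Subgroup.closure {g, t} := by rw [hc]; trivial
    have hmem : π w ∈ Subgroup.map π (Subgroup.closure {g, t}) :=
      Subgroup.mem_map_of_mem π hw
    rw [MonoidHom.map_closure, Set.image_pair] at hmem
    have hle : Subgroup.closure {π g, π t} ≤ Subgroup.zpowers (π t) := by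
      rw [Subgroup.closure_le]
      rintro w' (rfl | rfl)
      · have hg1 : π g = 1 := by
          rw [QuotientGroup.mk'_apply, QuotientGroup.eq_one_iff]
          exact Subgroup.mem_zpowers g
        rw [hg1]; exact Subgroup.one_mem _
      · exact Subgroup.mem_zpowers _
    obtain ⟨i, hi⟩ := hle hmem
    exact ⟨i, hi.symm⟩
  obtain ⟨i, hi⟩ := hπ u
  obtain ⟨j, hj⟩ := hπ v
  have h1 : π ((u * v) * (v * u)⁻¹) = 1 := by
    rw [map_mul, map_inv, map_mul, map_mul, hi, hj, ← zpow_add, ← zpow_add, add_comm,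
      mul_inv_cancel]
  rwa [QuotientGroup.mk'_apply, QuotientGroup.eq_one_iff] at h1

end GeneralGroup

section RingLemmas

variable {A : Type*} [CommRing A]

lemma geom_sum_factor (r : A) (a b : ℕ) :
    ∑ i ∈ Finset.range (a * b), r ^ i =
      (∑ i ∈ Finset.range a, r ^ i) * (∑ l ∈ Finset.range b, (r ^ a) ^ l) := by
  induction b with
  | zero => simp
  | succ b ih =>
      rw [Nat.mul_succ, Finset.sum_range_add, ih, Finset.sum_range_succ]
      have : ∀ x, r ^ (a * b + x) = (r ^ a) ^ b * r ^ x := by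
        intro x; rw [pow_add, pow_mul]
      simp_rw [this, ← Finset.mul_sum]
      ring

lemma key_identity (r : A) (E : ℕ) :
    (r - 1) * (∑ i ∈ Finset.range E, ∑ l ∈ Finset.range i, r ^ l) =
      (∑ i ∈ Finset.range E, r ^ i) - (E : A) := by
  rw [Finset.mul_sum]
  have h : ∀ i, (r - 1) * ∑ l ∈ Finset.range i, r ^ l = r ^ i - 1 := by
    intro i; rw [mul_comm]; exact geom_sum_mul r i
  simp_rw [h]
  rw [Finset.sum_sub_distrib]
  simp [Finset.card_range]

end RingLemmas

lemma nat_dvd_of_modEq {a b M d : ℕ} (h : a ≡ b [MOD M]) (h1 : d ∣ b) (h2 : d ∣ M) : d ∣ a := by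
  have h3 : (d : ℤ) ∣ (b : ℤ) - (a : ℤ) := dvd_trans (Int.natCast_dvd_natCast.mpr h2) h.dvd
  have h4 : (d : ℤ) ∣ (a : ℤ) := by
    have h5 : (a : ℤ) = (b : ℤ) - ((b : ℤ) - (a : ℤ)) := by ring
    rw [h5]
    exact dvd_sub (Int.natCast_dvd_natCast.mpr h1) h3
  exact_mod_cast h4

lemma gcd_pow_min (p a b : ℕ) : Nat.gcd (p ^ a) (p ^ b) = p ^ (min a b) := by
  rcases le_total a b with h | h
  · rw [Nat.gcd_eq_left (pow_dvd_pow p h), min_eq_left h]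
  · rw [Nat.gcd_eq_right (pow_dvd_pow p h), min_eq_right h]

set_option linter.unusedSectionVars false

namespace MetaAux

variable (p m n k : ℕ) (hp : p.Prime) (hk : (k : ZMod (p ^ m)) ^ (p ^ n) = 1)
include hp hk

/-- The unit of `ZMod (p^m)` given by `k`. -/
noncomputable def U : (ZMod (p ^ m))ˣ := (IsUnit.of_pow_eq_one hk (pow_ne_zero n hp.ne_zero)).unit

lemma U_coe : ((U p m n k hp hk : (ZMod (p^m))ˣ) : ZMod (p ^ m)) = (k : ZMod (p ^ m)) :=
  IsUnit.unit_spec _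

lemma U_pow : (U p m n k hp hk) ^ (p ^ n) = 1 := by
  ext; push_cast [U_coe]; exact hk

lemma metaPhi_one :
    metaPhi p m n k hp hk (Multiplicative.ofAdd 1) =
      (addAutMulEquiv (ZMod (p ^ m)))
        (DistribMulAction.toAddAut (ZMod (p ^ m))ˣ (ZMod (p ^ m)) (U p m n k hp hk)) := by
  have h1 : (1 : ZMod (p ^ n)) = ((1 : ℤ) : ZMod (p ^ n)) := by norm_num
  rw [h1]
  unfold metaPhi
  simp only [AddMonoidHom.coe_toMultiplicativeLeft, Function.comp_apply, toAdd_ofAdd,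
    ZMod.lift_coe]
  simp [U]



lemma val_one' (hn : 1 ≤ n) : (1 : ZMod (p ^ n)).val = 1 := by
  haveI : Fact (1 < p ^ n) := ⟨Nat.one_lt_pow (by omega) hp.one_lt⟩
  exact ZMod.val_one _

lemma U_pow_congr {a b : ℕ} (h : a ≡ b [MOD p ^ n]) :
    U p m n k hp hk ^ a = U p m n k hp hk ^ b := by
  rw [pow_eq_pow_iff_modEq]
  exact h.of_dvd (orderOf_dvd_of_pow_eq_one (U_pow p m n k hp hk))

lemma ofAdd_eq_pow (y : ZMod (p ^ n)) :
    Multiplicative.ofAdd y = (Multiplicative.ofAdd (1 : ZMod (p ^ n))) ^ y.val := by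
  haveI : NeZero (p ^ n) := ⟨pow_ne_zero n hp.ne_zero⟩
  rw [← ofAdd_nsmul]
  congr 1
  rw [nsmul_eq_mul, mul_one]
  exact (ZMod.natCast_rightInverse y).symm

lemma metaPhi_apply (y : ZMod (p ^ n)) (x : ZMod (p ^ m)) :
    metaPhi p m n k hp hk (Multiplicative.ofAdd y) (Multiplicative.ofAdd x) =
      Multiplicative.ofAdd (((U p m n k hp hk ^ y.val : (ZMod (p ^ m))ˣ) : ZMod (p ^ m)) * x) := by
  rw [ofAdd_eq_pow p m n k hp hk, map_pow, metaPhi_one, ← map_pow, ← map_pow]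
  rfl

/-- The element `(x, y)` of the metacyclic group. -/
noncomputable def elem (x : ZMod (p ^ m)) (y : ZMod (p ^ n)) :
    Multiplicative (ZMod (p ^ m)) ⋊[metaPhi p m n k hp hk] Multiplicative (ZMod (p ^ n)) :=
  ⟨Multiplicative.ofAdd x, Multiplicative.ofAdd y⟩

lemma elem_def (g : Multiplicative (ZMod (p ^ m)) ⋊[metaPhi p m n k hp hk] Multiplicative (ZMod (p ^ n))) :
    g = elem p m n k hp hk g.left.toAdd g.right.toAdd := rfl

lemma elem_inj {x₁ x₂ : ZMod (p ^ m)} {y₁ y₂ : ZMod (p ^ n)}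
    (h : elem p m n k hp hk x₁ y₁ = elem p m n k hp hk x₂ y₂) : x₁ = x₂ ∧ y₁ = y₂ := by
  exact ⟨congrArg Multiplicative.toAdd (congrArg SemidirectProduct.left h),
    congrArg Multiplicative.toAdd (congrArg SemidirectProduct.right h)⟩

lemma elem_mul (x₁ x₂ : ZMod (p ^ m)) (y₁ y₂ : ZMod (p ^ n)) :
    elem p m n k hp hk x₁ y₁ * elem p m n k hp hk x₂ y₂ =
      elem p m n k hp hk (x₁ + ((U p m n k hp hk ^ y₁.val : (ZMod (p ^ m))ˣ) : ZMod (p ^ m)) * x₂) (y₁ + y₂) := by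
  apply SemidirectProduct.ext
  · rw [SemidirectProduct.mul_left]
    show Multiplicative.ofAdd x₁ * metaPhi p m n k hp hk (Multiplicative.ofAdd y₁) (Multiplicative.ofAdd x₂) = _
    rw [metaPhi_apply]
    rfl
  · rfl

lemma elem_one : elem p m n k hp hk 0 0 = 1 := rfl

lemma val_nsmul_modEq (e : ℕ) (y : ZMod (p ^ n)) : (e • y).val ≡ e * y.val [MOD p ^ n] := by
  rw [nsmul_eq_mul, ZMod.val_mul]
  calc (e : ZMod (p ^ n)).val * y.val % p ^ n
      ≡ (e : ZMod (p ^ n)).val * y.val [MOD p ^ n] := (Nat.mod_modEq _ _)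
    _ ≡ e * y.val [MOD p ^ n] := Nat.ModEq.mul_right _ (by rw [ZMod.val_natCast]; exact (Nat.mod_modEq _ _))

/-- Geometric-sum coefficient. -/
noncomputable def T (y : ZMod (p ^ n)) (e : ℕ) : ZMod (p ^ m) :=
  ∑ i ∈ Finset.range e, (((U p m n k hp hk ^ y.val : (ZMod (p ^ m))ˣ) : ZMod (p ^ m))) ^ i

lemma elem_pow (x : ZMod (p ^ m)) (y : ZMod (p ^ n)) (e : ℕ) :
    (elem p m n k hp hk x y) ^ e = elem p m n k hp hk (T p m n k hp hk y e * x) (e • y) := by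
  induction e with
  | zero => simp [T, elem_one]
  | succ e ih =>
      rw [pow_succ, ih, elem_mul]
      congr 1
      · have h1 : U p m n k hp hk ^ (e • y).val = (U p m n k hp hk ^ y.val) ^ e := by
          rw [← pow_mul]
          apply U_pow_congr p m n k hp hk
          have h2 := val_nsmul_modEq p m n k hp hk e y
          rwa [Nat.mul_comm] at h2
        rw [h1, T, T, Finset.sum_range_succ]
        push_cast
        ring
      · rw [succ_nsmul]

lemma elem_congr {x₁ x₂ : ZMod (p ^ m)} {y₁ y₂ : ZMod (p ^ n)} (h1 : x₁ = x₂) (h2 : y₁ = y₂) :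
    elem p m n k hp hk x₁ y₁ = elem p m n k hp hk x₂ y₂ := by rw [h1, h2]

lemma T_def (y : ZMod (p ^ n)) (e : ℕ) :
    T p m n k hp hk y e =
      ∑ i ∈ Finset.range e,
        ((U p m n k hp hk ^ y.val : (ZMod (p ^ m))ˣ) : ZMod (p ^ m)) ^ i := rfl

/-- Generator `a`. -/
noncomputable def aG := elem p m n k hp hk 1 0

/-- Generator `b`. -/
noncomputable def bG := elem p m n k hp hk 0 1

lemma aG_def : aG p m n k hp hk = elem p m n k hp hk 1 0 := rfl
lemma bG_def : bG p m n k hp hk = elem p m n k hp hk 0 1 := rfl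

lemma T_zero (e : ℕ) : T p m n k hp hk 0 e = (e : ZMod (p ^ m)) := by
  haveI : NeZero (p ^ n) := ⟨pow_ne_zero n hp.ne_zero⟩
  rw [T_def]
  simp [ZMod.val_zero]

lemma aG_pow (x : ZMod (p ^ m)) :
    aG p m n k hp hk ^ x.val = elem p m n k hp hk x 0 := by
  haveI : NeZero (p ^ m) := ⟨pow_ne_zero m hp.ne_zero⟩
  rw [aG_def, elem_pow, T_zero]
  exact elem_congr p m n k hp hk
    (by rw [mul_one]; exact ZMod.natCast_rightInverse x) (smul_zero _)

lemma bG_pow (y : ZMod (p ^ n)) :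
    bG p m n k hp hk ^ y.val = elem p m n k hp hk 0 y := by
  haveI : NeZero (p ^ n) := ⟨pow_ne_zero n hp.ne_zero⟩
  rw [bG_def, elem_pow]
  exact elem_congr p m n k hp hk (mul_zero _)
    (by rw [nsmul_eq_mul, mul_one]; exact ZMod.natCast_rightInverse y)

lemma closure_ab :
    Subgroup.closure {aG p m n k hp hk, bG p m n k hp hk} = ⊤ := by
  rw [eq_top_iff]
  rintro g -
  have hg : aG p m n k hp hk ^ (g.left.toAdd).val * bG p m n k hp hk ^ (g.right.toAdd).val = g := by
    rw [aG_pow, bG_pow, elem_mul, mul_zero, add_zero, zero_add]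
    exact (elem_def p m n k hp hk g).symm
  rw [← hg]
  exact mul_mem (pow_mem (Subgroup.subset_closure (by simp)) _)
    (pow_mem (Subgroup.subset_closure (by simp)) _)

lemma ba_eq (hn : 1 ≤ n) :
    bG p m n k hp hk * aG p m n k hp hk =
      elem p m n k hp hk ((k : ZMod (p ^ m))) 1 := by
  rw [aG_def, bG_def, elem_mul, val_one' p m n k hp hk hn, pow_one, U_coe]
  exact elem_congr p m n k hp hk (by ring) (add_zero 1)

lemma rel_ab (hn : 1 ≤ n) :
    bG p m n k hp hk * aG p m n k hp hk * (bG p m n k hp hk)⁻¹ =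
      aG p m n k hp hk ^ (k : ℕ) := by
  haveI : NeZero (p ^ n) := ⟨pow_ne_zero n hp.ne_zero⟩
  rw [mul_inv_eq_iff_eq_mul, ba_eq p m n k hp hk hn, aG_def, bG_def, elem_pow, T_zero, elem_mul]
  refine (elem_congr p m n k hp hk ?_ ?_).symm
  · simp [ZMod.val_zero]
  · simp

lemma orderOf_aG : orderOf (aG p m n k hp hk) = p ^ m := by
  have h1 : aG p m n k hp hk = SemidirectProduct.inl (Multiplicative.ofAdd (1 : ZMod (p ^ m))) := rfl
  rw [h1, orderOf_injective SemidirectProduct.inl SemidirectProduct.inl_injective,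
    orderOf_ofAdd_eq_addOrderOf, ZMod.addOrderOf_one]

theorem main_step (hm : 1 ≤ m) (hn : 1 ≤ n) (k₁ : ℕ)
    (hk₁ : ((k₁ : ℕ) : ZMod (p ^ m)) ^ (p ^ n) = 1)
    (g t : Multiplicative (ZMod (p ^ m)) ⋊[metaPhi p m n k hp hk] Multiplicative (ZMod (p ^ n)))
    (hog : orderOf g = p ^ m) (hrel : t * g * t⁻¹ = g ^ (k₁ : ℕ))
    (hc : Subgroup.closure {g, t} = ⊤) :
    ∃ e : ℕ, ((k : ℕ) : ZMod (p ^ m)) = ((k₁ : ℕ) : ZMod (p ^ m)) ^ e := by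
  haveI hnz1 : NeZero (p ^ n) := ⟨pow_ne_zero n hp.ne_zero⟩
  haveI hnz2 : NeZero (p ^ m) := ⟨pow_ne_zero m hp.ne_zero⟩
  have hL1 : 1 ≤ p ^ n := Nat.one_le_pow _ _ hp.pos
  have hgL : g ^ (k₁ ^ (p ^ n)) = g := by
    have hmod : k₁ ^ (p ^ n) ≡ 1 [MOD p ^ m] := by
      rw [← ZMod.natCast_eq_natCast_iff]
      push_cast
      exact hk₁
    conv_rhs => rw [← pow_one g]
    rw [pow_eq_pow_iff_modEq, hog]
    exact hmod
  have hNorm := zpowers_normal_of g t k₁ (p ^ n) hL1 hgL hrel hc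
  have hcm := commutator_mem_zpowers g t hNorm hc (bG p m n k hp hk) (aG p m n k hp hk)
  have hval : (bG p m n k hp hk * aG p m n k hp hk) *
      (aG p m n k hp hk * bG p m n k hp hk)⁻¹ =
      elem p m n k hp hk ((k : ZMod (p ^ m)) - 1) 0 := by
    rw [mul_inv_eq_iff_eq_mul, ba_eq p m n k hp hk hn]
    have hab : aG p m n k hp hk * bG p m n k hp hk = elem p m n k hp hk 1 1 := by
      rw [aG_def, bG_def, elem_mul]
      exact elem_congr p m n k hp hk (by simp) (by simp)
    rw [hab, elem_mul]
    refine elem_congr p m n k hp hk ?_ ?_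
    · simp [ZMod.val_zero]
    · simp
  rw [hval] at hcm
  obtain ⟨μ, hμ⟩ := Subgroup.mem_zpowers_iff.mp hcm
  obtain ⟨μ', hμmod⟩ : ∃ μ' : ℕ, g ^ μ' = elem p m n k hp hk ((k : ZMod (p ^ m)) - 1) 0 := by
    refine ⟨(μ % ((p ^ m : ℕ) : ℤ)).toNat, ?_⟩
    rw [← hμ, ← zpow_natCast, Int.toNat_of_nonneg (Int.emod_nonneg _ (by exact_mod_cast pow_ne_zero m hp.ne_zero)),
      show ((p ^ m : ℕ) : ℤ) = (orderOf g : ℤ) from by rw [hog]]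
    exact zpow_mod_orderOf g μ
  obtain ⟨x, y, hg⟩ : ∃ x y, g = elem p m n k hp hk x y := ⟨_, _, elem_def p m n k hp hk g⟩
  rw [hg, elem_pow] at hμmod
  obtain ⟨hT, hy0⟩ := elem_inj p m n k hp hk hμmod
  have hjdvd : addOrderOf y ∣ p ^ n := addOrderOf_dvd_iff_nsmul_eq_zero.mpr (by
    rw [nsmul_eq_mul, ZMod.natCast_self, zero_mul])
  obtain ⟨j, hjn, hj⟩ := (Nat.dvd_prime_pow hp).mp hjdvd
  have hdvdμ : p ^ j ∣ μ' := by
    rw [← hj]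
    exact addOrderOf_dvd_iff_nsmul_eq_zero.mpr hy0
  obtain ⟨d, hd⟩ := hdvdμ
  set κ : ZMod (p ^ m) := ((U p m n k hp hk ^ y.val : (ZMod (p ^ m))ˣ) : ZMod (p ^ m)) with hκ
  have hTf : T p m n k hp hk y μ' =
      T p m n k hp hk y (p ^ j) * (∑ l ∈ Finset.range d, (κ ^ (p ^ j)) ^ l) := by
    rw [hd, T_def, T_def, ← hκ]
    exact geom_sum_factor κ (p ^ j) d
  have hgpj : g ^ (p ^ j) = elem p m n k hp hk (T p m n k hp hk y (p ^ j) * x) 0 := by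
    rw [hg, elem_pow]
    exact elem_congr p m n k hp hk rfl (by rw [← hj]; exact addOrderOf_nsmul_eq_zero y)
  have hordpj : orderOf (g ^ (p ^ j)) = p ^ (m - min m j) := by
    rw [orderOf_pow' g (pow_ne_zero j hp.ne_zero), hog, gcd_pow_min p m j,
      Nat.pow_div (min_le_left m j) hp.pos]
  have hAord : addOrderOf (T p m n k hp hk y (p ^ j) * x) = p ^ (m - min m j) := by
    have h1 : orderOf (elem p m n k hp hk (T p m n k hp hk y (p ^ j) * x) 0) =
        addOrderOf (T p m n k hp hk y (p ^ j) * x) := by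
      show orderOf (SemidirectProduct.inl (Multiplicative.ofAdd _)) = _
      rw [orderOf_injective SemidirectProduct.inl SemidirectProduct.inl_injective,
        orderOf_ofAdd_eq_addOrderOf]
    rw [← h1, ← hgpj, hordpj]
  have hAdvd : p ^ (min m j) ∣ (T p m n k hp hk y (p ^ j) * x).val := by
    have h2 : (p ^ (m - min m j)) • (T p m n k hp hk y (p ^ j) * x) = 0 := by
      rw [← hAord]
      exact addOrderOf_nsmul_eq_zero _
    have h3 : ((p ^ (m - min m j) * (T p m n k hp hk y (p ^ j) * x).val : ℕ) : ZMod (p ^ m)) = 0 := by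
      push_cast
      rw [ZMod.natCast_val, ZMod.cast_id]
      rw [nsmul_eq_mul] at h2
      exact_mod_cast h2
    rw [ZMod.natCast_eq_zero_iff] at h3
    have h4 : p ^ (m - min m j) * p ^ (min m j) ∣
        p ^ (m - min m j) * (T p m n k hp hk y (p ^ j) * x).val := by
      rw [← pow_add, show m - min m j + min m j = m from by omega]
      exact h3
    exact (Nat.mul_dvd_mul_iff_left (Nat.pow_pos hp.pos)).mp h4
  obtain ⟨q, hq⟩ := hAdvd
  have hA' : T p m n k hp hk y (p ^ j) * x =
      ((p ^ (min m j) : ℕ) : ZMod (p ^ m)) * (q : ZMod (p ^ m)) := by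
    conv_lhs => rw [← ZMod.natCast_rightInverse (T p m n k hp hk y (p ^ j) * x)]
    rw [hq]
    push_cast
    ring
  have hkm1 : (k : ZMod (p ^ m)) - 1 =
      ((p ^ (min m j) : ℕ) : ZMod (p ^ m)) *
        ((q : ZMod (p ^ m)) * (∑ l ∈ Finset.range d, (κ ^ (p ^ j)) ^ l)) := by
    rw [← hT, hTf, show T p m n k hp hk y (p ^ j) * (∑ l ∈ Finset.range d, (κ ^ (p ^ j)) ^ l) * x
        = (T p m n k hp hk y (p ^ j) * x) * (∑ l ∈ Finset.range d, (κ ^ (p ^ j)) ^ l) from by ring,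
      hA']
    ring
  have hku : IsUnit ((k : ℕ) : ZMod (p ^ m)) := IsUnit.of_pow_eq_one hk (pow_ne_zero n hp.ne_zero)
  have hpk : ¬ p ∣ k := by
    intro hdvd
    have hco := (ZMod.isUnit_iff_coprime k (p ^ m)).mp hku
    have h5 : p ∣ Nat.gcd k (p ^ m) := Nat.dvd_gcd hdvd (dvd_pow_self p (by omega))
    rw [hco] at h5
    have := Nat.dvd_one.mp h5
    have := hp.one_lt
    omega
  have hk1le : 1 ≤ k := by
    rcases Nat.eq_zero_or_pos k with h | h
    · exact absurd (h ▸ dvd_zero p) hpk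
    · exact h
  have hdvdk1 : p ^ (min m j) ∣ (k - 1) := by
    have hc1 : ((k - 1 : ℕ) : ZMod (p ^ m)) =
        ((p ^ (min m j) * ((q : ZMod (p ^ m)) *
          (∑ l ∈ Finset.range d, (κ ^ (p ^ j)) ^ l)).val : ℕ) : ZMod (p ^ m)) := by
      push_cast [Nat.cast_sub hk1le]
      rw [ZMod.natCast_val, ZMod.cast_id]
      push_cast at hkm1
      exact hkm1
    have hmodeq := (ZMod.natCast_eq_natCast_iff _ _ _).mp hc1
    exact nat_dvd_of_modEq hmodeq (dvd_mul_right _ _) (pow_dvd_pow p (min_le_left m j))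
  by_cases hjm : j ≤ m
  case neg =>
    refine ⟨p ^ n, ?_⟩
    rw [hk₁]
    have hminm : min m j = m := min_eq_left (by omega)
    rw [hminm] at hdvdk1
    have h5 : ((k - 1 : ℕ) : ZMod (p ^ m)) = 0 := (ZMod.natCast_eq_zero_iff _ _).mpr hdvdk1
    rw [Nat.cast_sub hk1le] at h5
    push_cast at h5
    rw [sub_eq_zero] at h5
    exact_mod_cast h5
  case pos =>
    have hminj : min m j = j := min_eq_right hjm
    rw [hminj] at hdvdk1
    have hEy : (k : ℕ) • y = y := by
      have h6 : (k - 1 : ℕ) • y = 0 := addOrderOf_dvd_iff_nsmul_eq_zero.mp (by rw [hj]; exact hdvdk1)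
      calc (k : ℕ) • y = ((k - 1) + 1) • y := by congr 1; omega
        _ = (k - 1) • y + 1 • y := add_nsmul y _ _
        _ = y := by rw [h6, one_nsmul, zero_add]
    set W : ZMod (p ^ m) := ∑ i ∈ Finset.range k, T p m n k hp hk y i with hW
    have hWkey : (κ - 1) * W = T p m n k hp hk y k - ((k : ℕ) : ZMod (p ^ m)) := by
      rw [hW, T_def]
      simp_rw [T_def]
      rw [← hκ]
      exact key_identity κ k
    set cc := elem p m n k hp hk (- W * x) 1 with hcc
    have hconj : cc * g = g ^ (k : ℕ) * cc := by
      rw [hcc, hg, elem_mul, elem_pow, hEy, elem_mul]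
      refine elem_congr p m n k hp hk ?_ (add_comm 1 y)
      rw [val_one' p m n k hp hk hn, pow_one, U_coe, ← hκ]
      linear_combination x * hWkey
    have hconj' : cc * g * cc⁻¹ = g ^ (k : ℕ) := by
      rw [mul_inv_eq_iff_eq_mul]
      exact hconj
    obtain ⟨e, he⟩ := conj_pow_of_closure g t k₁ (p ^ n) hL1 hgL hrel hc cc
    have hpow : g ^ (k : ℕ) = g ^ (k₁ ^ e) := by rw [← hconj', he]
    have hmod2 : (k : ℕ) ≡ k₁ ^ e [MOD p ^ m] := by
      rw [← hog]
      exact pow_eq_pow_iff_modEq.mp hpow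
    refine ⟨e, ?_⟩
    have h7 := (ZMod.natCast_eq_natCast_iff _ _ _).mpr hmod2
    push_cast at h7
    exact h7

end MetaAux

section Assembly

theorem iso_step (p m n k₁ k₂ : ℕ) (hp : p.Prime) (hm : 1 ≤ m) (hn : 1 ≤ n)
    (h₁ : (k₁ : ZMod (p ^ m)) ^ (p ^ n) = 1) (h₂ : (k₂ : ZMod (p ^ m)) ^ (p ^ n) = 1)
    (σ : (Multiplicative (ZMod (p ^ m)) ⋊[metaPhi p m n k₁ hp h₁] Multiplicative (ZMod (p ^ n))) ≃*
         (Multiplicative (ZMod (p ^ m)) ⋊[metaPhi p m n k₂ hp h₂] Multiplicative (ZMod (p ^ n)))) :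
    ∃ e : ℕ, ((k₂ : ℕ) : ZMod (p ^ m)) = ((k₁ : ℕ) : ZMod (p ^ m)) ^ e := by
  apply MetaAux.main_step p m n k₂ hp h₂ hm hn k₁ h₁ (σ (MetaAux.aG p m n k₁ hp h₁))
    (σ (MetaAux.bG p m n k₁ hp h₁))
  · have h3 := orderOf_injective σ.toMonoidHom σ.injective (MetaAux.aG p m n k₁ hp h₁)
    simpa [MetaAux.orderOf_aG] using h3
  · rw [← map_inv, ← map_mul, ← map_mul, MetaAux.rel_ab p m n k₁ hp h₁ hn, map_pow]
  · have h3 : ({σ (MetaAux.aG p m n k₁ hp h₁), σ (MetaAux.bG p m n k₁ hp h₁)} :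
        Set _) = σ.toMonoidHom '' {MetaAux.aG p m n k₁ hp h₁, MetaAux.bG p m n k₁ hp h₁} := by
      rw [Set.image_pair]
      rfl
    rw [h3, ← MonoidHom.map_closure, MetaAux.closure_ab,
      Subgroup.map_top_of_surjective _ σ.surjective]

noncomputable def fwdFun (p m n k₁ k₂ : ℕ) (hp : p.Prime)
    (h₁ : (k₁ : ZMod (p ^ m)) ^ (p ^ n) = 1) (h₂ : (k₂ : ZMod (p ^ m)) ^ (p ^ n) = 1)
    (wv : ZMod (p ^ n)) :
    (Multiplicative (ZMod (p ^ m)) ⋊[metaPhi p m n k₂ hp h₂] Multiplicative (ZMod (p ^ n))) →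
    (Multiplicative (ZMod (p ^ m)) ⋊[metaPhi p m n k₁ hp h₁] Multiplicative (ZMod (p ^ n))) :=
  fun g => MetaAux.elem p m n k₁ hp h₁ g.left.toAdd (wv * g.right.toAdd)

lemma fwdFun_elem (p m n k₁ k₂ : ℕ) (hp : p.Prime)
    (h₁ : (k₁ : ZMod (p ^ m)) ^ (p ^ n) = 1) (h₂ : (k₂ : ZMod (p ^ m)) ^ (p ^ n) = 1)
    (wv : ZMod (p ^ n)) (x : ZMod (p ^ m)) (y : ZMod (p ^ n)) :
    fwdFun p m n k₁ k₂ hp h₁ h₂ wv (MetaAux.elem p m n k₂ hp h₂ x y) =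
      MetaAux.elem p m n k₁ hp h₁ x (wv * y) := rfl

lemma fwdFun_comp (p m n k₁ k₂ : ℕ) (hp : p.Prime)
    (h₁ : (k₁ : ZMod (p ^ m)) ^ (p ^ n) = 1) (h₂ : (k₂ : ZMod (p ^ m)) ^ (p ^ n) = 1)
    (w1 w2 : ZMod (p ^ n)) (hw : w2 * w1 = 1)
    (g : Multiplicative (ZMod (p ^ m)) ⋊[metaPhi p m n k₂ hp h₂] Multiplicative (ZMod (p ^ n))) :
    fwdFun p m n k₂ k₁ hp h₂ h₁ w2 (fwdFun p m n k₁ k₂ hp h₁ h₂ w1 g) = g := by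
  show MetaAux.elem p m n k₂ hp h₂ g.left.toAdd (w2 * (w1 * g.right.toAdd)) = g
  rw [← mul_assoc, hw, one_mul]
  exact (MetaAux.elem_def p m n k₂ hp h₂ g).symm

lemma U_compat (p m n k₁ k₂ : ℕ) (hp : p.Prime)
    (h₁ : (k₁ : ZMod (p ^ m)) ^ (p ^ n) = 1) (h₂ : (k₂ : ZMod (p ^ m)) ^ (p ^ n) = 1)
    (v : ℕ) (hkv : ((k₂ : ℕ) : ZMod (p ^ m)) = ((k₁ : ℕ) : ZMod (p ^ m)) ^ v)
    (y : ZMod (p ^ n)) :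
    ((MetaAux.U p m n k₂ hp h₂ ^ y.val : (ZMod (p ^ m))ˣ) : ZMod (p ^ m)) =
      ((MetaAux.U p m n k₁ hp h₁ ^ (((v : ℕ) : ZMod (p ^ n)) * y).val :
        (ZMod (p ^ m))ˣ) : ZMod (p ^ m)) := by
  have hU : MetaAux.U p m n k₁ hp h₁ ^ v = MetaAux.U p m n k₂ hp h₂ := by
    ext
    rw [Units.val_pow_eq_pow_val, MetaAux.U_coe, MetaAux.U_coe, hkv]
  have h5 : (((v : ℕ) : ZMod (p ^ n)) * y) = v • y := (nsmul_eq_mul v y).symm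
  rw [h5, MetaAux.U_pow_congr p m n k₁ hp h₁ (MetaAux.val_nsmul_modEq p m n k₁ hp h₁ v y),
    pow_mul, hU]

lemma fwdFun_mul (p m n k₁ k₂ : ℕ) (hp : p.Prime)
    (h₁ : (k₁ : ZMod (p ^ m)) ^ (p ^ n) = 1) (h₂ : (k₂ : ZMod (p ^ m)) ^ (p ^ n) = 1)
    (v : ℕ) (hkv : ((k₂ : ℕ) : ZMod (p ^ m)) = ((k₁ : ℕ) : ZMod (p ^ m)) ^ v)
    (g₁ g₂ : Multiplicative (ZMod (p ^ m)) ⋊[metaPhi p m n k₂ hp h₂] Multiplicative (ZMod (p ^ n))) :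
    fwdFun p m n k₁ k₂ hp h₁ h₂ ((v : ℕ) : ZMod (p ^ n)) (g₁ * g₂) =
      fwdFun p m n k₁ k₂ hp h₁ h₂ ((v : ℕ) : ZMod (p ^ n)) g₁ *
      fwdFun p m n k₁ k₂ hp h₁ h₂ ((v : ℕ) : ZMod (p ^ n)) g₂ := by
  rw [MetaAux.elem_def p m n k₂ hp h₂ g₁, MetaAux.elem_def p m n k₂ hp h₂ g₂,
    MetaAux.elem_mul, fwdFun_elem, fwdFun_elem, fwdFun_elem, MetaAux.elem_mul]
  refine MetaAux.elem_congr p m n k₁ hp h₁ ?_ (mul_add _ _ _)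
  rw [U_compat p m n k₁ k₂ hp h₁ h₂ v hkv]

noncomputable def fwdEquiv (p m n k₁ k₂ : ℕ) (hp : p.Prime)
    (h₁ : (k₁ : ZMod (p ^ m)) ^ (p ^ n) = 1) (h₂ : (k₂ : ZMod (p ^ m)) ^ (p ^ n) = 1)
    (v : ℕ) (hv : ¬ p ∣ v)
    (hkv : ((k₂ : ℕ) : ZMod (p ^ m)) = ((k₁ : ℕ) : ZMod (p ^ m)) ^ v) :
    (Multiplicative (ZMod (p ^ m)) ⋊[metaPhi p m n k₂ hp h₂] Multiplicative (ZMod (p ^ n))) ≃*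
    (Multiplicative (ZMod (p ^ m)) ⋊[metaPhi p m n k₁ hp h₁] Multiplicative (ZMod (p ^ n))) := by
  have hco : Nat.Coprime v (p ^ n) :=
    Nat.Coprime.pow_right n (Nat.coprime_comm.mp ((Nat.Prime.coprime_iff_not_dvd hp).mpr hv))
  have hw1 : ((ZMod.unitOfCoprime v hco : (ZMod (p ^ n))ˣ) : ZMod (p ^ n)) = ((v : ℕ) : ZMod (p ^ n)) :=
    ZMod.coe_unitOfCoprime v hco
  refine
    { toFun := fwdFun p m n k₁ k₂ hp h₁ h₂ ((ZMod.unitOfCoprime v hco : (ZMod (p ^ n))ˣ) : ZMod (p ^ n)),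
      invFun := fwdFun p m n k₂ k₁ hp h₂ h₁ (((ZMod.unitOfCoprime v hco)⁻¹ : (ZMod (p ^ n))ˣ) : ZMod (p ^ n)),
      left_inv := ?_, right_inv := ?_, map_mul' := ?_ }
  · intro g
    refine fwdFun_comp p m n k₁ k₂ hp h₁ h₂ _ _ ?_ g
    rw [← Units.val_mul, inv_mul_cancel, Units.val_one]
  · intro g
    refine fwdFun_comp p m n k₂ k₁ hp h₂ h₁ _ _ ?_ g
    rw [← Units.val_mul, mul_inv_cancel, Units.val_one]
  · intro g₁ g₂
    show fwdFun p m n k₁ k₂ hp h₁ h₂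
        ((ZMod.unitOfCoprime v hco : (ZMod (p ^ n))ˣ) : ZMod (p ^ n)) (g₁ * g₂) =
      fwdFun p m n k₁ k₂ hp h₁ h₂
        ((ZMod.unitOfCoprime v hco : (ZMod (p ^ n))ˣ) : ZMod (p ^ n)) g₁ *
      fwdFun p m n k₁ k₂ hp h₁ h₂
        ((ZMod.unitOfCoprime v hco : (ZMod (p ^ n))ˣ) : ZMod (p ^ n)) g₂
    rw [hw1]
    exact fwdFun_mul p m n k₁ k₂ hp h₁ h₂ v hkv g₁ g₂

end Assembly

/-- `G(p,m,n,k₁) ≃ G(p,m,n,k₂)` iff `k₂ ≡ k₁^v (mod p^m)` for some `v`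
prime to `p`. -/
theorem metaG_iso_iff (p m n k₁ k₂ : ℕ) (hp : p.Prime) (hm : 1 ≤ m) (hn : 1 ≤ n)
    (h₁ : (k₁ : ZMod (p ^ m)) ^ (p ^ n) = 1) (h₂ : (k₂ : ZMod (p ^ m)) ^ (p ^ n) = 1) :
    Nonempty (metaG p m n k₁ hp h₁ ≃* metaG p m n k₂ hp h₂) ↔
      ∃ v : ℕ, ¬ p ∣ v ∧ k₂ ≡ k₁ ^ v [MOD p ^ m] := by
  constructor
  · rintro ⟨σ⟩
    obtain ⟨e, he⟩ := iso_step p m n k₁ k₂ hp hm hn h₁ h₂ σ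
    obtain ⟨f, hf⟩ := iso_step p m n k₂ k₁ hp hm hn h₂ h₁ σ.symm
    by_cases hk1 : ((k₁ : ℕ) : ZMod (p ^ m)) = 1
    · refine ⟨1, by intro h; have := Nat.dvd_one.mp h; have := hp.one_lt; omega, ?_⟩
      rw [← ZMod.natCast_eq_natCast_iff]
      push_cast
      simp [he, hk1]
    · refine ⟨e, ?_, ?_⟩
      · intro hpe
        have hu2 : MetaAux.U p m n k₂ hp h₂ = MetaAux.U p m n k₁ hp h₁ ^ e := by
          ext
          rw [Units.val_pow_eq_pow_val, MetaAux.U_coe, MetaAux.U_coe, he]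
        have hu1 : MetaAux.U p m n k₁ hp h₁ = MetaAux.U p m n k₂ hp h₂ ^ f := by
          ext
          rw [Units.val_pow_eq_pow_val, MetaAux.U_coe, MetaAux.U_coe, hf]
        have h7 : MetaAux.U p m n k₁ hp h₁ ^ 1 = MetaAux.U p m n k₁ hp h₁ ^ (e * f) := by
          rw [pow_one, pow_mul]
          nth_rewrite 1 [hu1]
          rw [hu2]
        have h8 : 1 ≡ e * f [MOD orderOf (MetaAux.U p m n k₁ hp h₁)] :=
          pow_eq_pow_iff_modEq.mp h7
        have h9 : orderOf (MetaAux.U p m n k₁ hp h₁) ∣ p ^ n :=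
          orderOf_dvd_of_pow_eq_one (MetaAux.U_pow p m n k₁ hp h₁)
        obtain ⟨i, hin, hi⟩ := (Nat.dvd_prime_pow hp).mp h9
        have hi1 : i ≠ 0 := by
          intro h0
          rw [h0, pow_zero] at hi
          have hU1 : MetaAux.U p m n k₁ hp h₁ = 1 := orderOf_eq_one_iff.mp hi
          apply hk1
          rw [← MetaAux.U_coe p m n k₁ hp h₁, hU1, Units.val_one]
        rw [hi] at h8
        have h10 : 1 ≡ e * f [MOD p] := Nat.ModEq.of_dvd (dvd_pow_self p hi1) h8
        have h11 : p ∣ e * f := Dvd.dvd.mul_right hpe f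
        have h12 : (1 : ℕ) ≡ 0 [MOD p] := h10.trans ((Nat.modEq_zero_iff_dvd).mpr h11)
        have h13 : p ∣ 1 := (Nat.modEq_zero_iff_dvd).mp h12
        have := Nat.dvd_one.mp h13
        have := hp.one_lt
        omega
      · rw [← ZMod.natCast_eq_natCast_iff]
        push_cast
        exact he
  · rintro ⟨v, hv, hmod⟩
    have hkv : ((k₂ : ℕ) : ZMod (p ^ m)) = ((k₁ : ℕ) : ZMod (p ^ m)) ^ v := by
      have h4 := (ZMod.natCast_eq_natCast_iff _ _ _).mpr hmod
      push_cast at h4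
      exact h4
    exact ⟨(fwdEquiv p m n k₁ k₂ hp h₁ h₂ v hv hkv).symm⟩
end

section
/- Let p be an odd prime and m, n ≥ 1. Then for any natural numbers k₁, k₂ satisfying k₁^{p^n} ≡ 1 (mod p^m) and k₂^{p^n} ≡ 1 (mod p^m), and for every natural number N ≥ 1, the number of subgroups of order N of G(p,m,n,k₁) equals the number of subgroups of order N of G(p,m,n,k₂); that is, G(p,m,n,k₁) and G(p,m,n,k₂) have the same group zeta function. -/
open Finset Multiplicative SemidirectProduct Pointwise

/-! ### Number theory -/

lemma Z1' (x : ℤ) (r : ℕ) : ∃ f : ℤ, (1+x)^r = 1 + r*x + x^2*f := by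
  induction r with
  | zero => exact ⟨0, by ring⟩
  | succ r ih =>
    obtain ⟨f, hf⟩ := ih
    exact ⟨f + r + x*f, by rw [pow_succ, hf]; push_cast; ring⟩

lemma Z2' (p : ℕ) (hp : p.Prime) (hodd : p ≠ 2) (c : ℤ) :
    ∃ d : ℤ, ∑ r ∈ range p, (1+(p:ℤ)*c)^r = p*(1+p*d) := by
  obtain ⟨e, he⟩ := hp.odd_of_ne_two hodd
  set x : ℤ := p*c with hx
  have hsum : ∀ r : ℕ, (1+x)^r = 1 + r*x + x^2*(Z1' x r).choose := fun r => (Z1' x r).choose_spec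
  have h1 : ∑ r ∈ range p, (1+x)^r
      = p + (∑ r ∈ range p, (r:ℤ))*x + x^2 * ∑ r ∈ range p, (Z1' x r).choose := by
    rw [Finset.sum_congr rfl (fun r _ => hsum r)]
    rw [Finset.sum_add_distrib, Finset.sum_add_distrib, Finset.sum_const, ← Finset.sum_mul,
      ← Finset.mul_sum]
    simp [mul_comm]
  have h2 : (∑ r ∈ range p, (r:ℤ)) = p * e := by
    have := Finset.sum_range_id_mul_two p
    have h3 : ((∑ r ∈ range p, r : ℕ) : ℤ) * 2 = p * (p-1 : ℕ) := by
      exact_mod_cast congrArg (Nat.cast : ℕ → ℤ) this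
    have h4 : (p - 1 : ℕ) = 2*e := by omega
    push_cast [h4] at h3
    linarith
  exact ⟨e*c + c^2*(∑ r ∈ range p, (Z1' x r).choose), by rw [h1, h2, hx]; ring⟩

lemma Z3' (x : ℤ) (a b : ℕ) :
    ∑ i ∈ range (a*b), x^i = (∑ i ∈ range a, x^i) * ∑ j ∈ range b, (x^a)^j := by
  induction b with
  | zero => simp
  | succ b ih =>
    rw [Nat.mul_succ, Finset.sum_range_add, Finset.sum_range_succ, ih]
    have : ∀ i, x^(a*b+i) = x^(a*b) * x^i := fun i => pow_add x (a*b) i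
    rw [Finset.sum_congr rfl (fun i _ => this i), ← Finset.mul_sum, ← pow_mul]
    ring

lemma Z0' (p : ℕ) (c : ℤ) (s : ℕ) : ∃ c' : ℤ, (1+(p:ℤ)*c)^s = 1 + p*c' := by
  obtain ⟨f, hf⟩ := Z1' ((p:ℤ)*c) s
  exact ⟨s*c + p*c^2*f, by rw [hf]; ring⟩

lemma Z4' (p : ℕ) (hp : p.Prime) (hodd : p ≠ 2) (c : ℤ) (t : ℕ) :
    ∃ d : ℤ, ∑ r ∈ range (p^t), (1+(p:ℤ)*c)^r = p^t*(1+p*d) := by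
  induction t with
  | zero => exact ⟨0, by simp⟩
  | succ t ih =>
    obtain ⟨d₁, hd₁⟩ := ih
    obtain ⟨c', hc'⟩ := Z0' p c (p^t)
    obtain ⟨d₂, hd₂⟩ := Z2' p hp hodd c'
    refine ⟨d₁ + d₂ + p*d₁*d₂, ?_⟩
    rw [pow_succ, Z3' _ (p^t) p, hd₁,
      Finset.sum_congr rfl (fun j _ => by rw [hc'] :
        ∀ j ∈ range p, ((1+(p:ℤ)*c)^(p^t))^j = (1+(p:ℤ)*c')^j), hd₂]
    ring

lemma geom_unit' (p m : ℕ) (hp : p.Prime) (hodd : p ≠ 2) (K : ℕ)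
    (hK : (K : ZMod p) = 1) (q : ℕ) :
    ∃ u : (ZMod (p^m))ˣ,
      (∑ r ∈ range (p^q), (K:ZMod (p^m))^r) = (p:ZMod (p^m))^q * u := by
  have hdvd : (p:ℤ) ∣ (K:ℤ) - 1 := by
    refine (ZMod.intCast_zmod_eq_zero_iff_dvd ((K:ℤ)-1) p).mp ?_
    push_cast
    rw [hK]; ring
  obtain ⟨c, hc⟩ := hdvd
  have hKc : (K:ℤ) = 1 + p*c := by linarith
  obtain ⟨d, hd⟩ := Z4' p hp hodd c q
  have hcast : ((∑ r ∈ range (p^q), (K:ℤ)^r : ℤ) : ZMod (p^m))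
      = ((p:ℤ)^q*(1+p*d) : ℤ) := by rw [← hKc] at hd; rw [hd]
  push_cast at hcast
  have hnil : IsNilpotent ((p:ZMod (p^m)) * (d:ZMod (p^m))) := by
    refine ⟨m, ?_⟩
    rw [mul_pow]
    have : (p:ZMod (p^m))^m = 0 := by
      have := ZMod.natCast_self (p^m)
      push_cast at this
      exact this
    rw [this, zero_mul]
  have hu := IsNilpotent.isUnit_one_add hnil
  exact ⟨hu.unit, by rw [IsUnit.unit_spec, hcast]⟩

lemma T_unit (p m n j k : ℕ) (hp : p.Prime) (hodd : p ≠ 2) (hm : 1 ≤ m)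
    (hk : (k : ZMod (p ^ m)) ^ (p ^ n) = 1) :
    ∃ u : (ZMod (p^m))ˣ,
      (∑ r ∈ range (p^(n-j)), (k:ZMod (p^m))^(r * p^j)) = (p:ZMod (p^m))^(n-j) * u := by
  haveI : Fact p.Prime := ⟨hp⟩
  have hkp : (k : ZMod p) = 1 := by
    have h1 : (ZMod.castHom (dvd_pow_self p (by omega : m ≠ 0)) (ZMod p))
        ((k : ZMod (p^m)))^(p^n) = 1 := by
      rw [← map_pow, hk, map_one]
    rw [map_natCast, ZMod.pow_card_pow] at h1
    exact h1
  have hK : ((k^(p^j) : ℕ) : ZMod p) = 1 := by push_cast [hkp]; simp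
  obtain ⟨u, hu⟩ := geom_unit' p m hp hodd (k^(p^j)) hK (n-j)
  refine ⟨u, ?_⟩
  rw [← hu]
  refine Finset.sum_congr rfl fun r _ => ?_
  push_cast
  rw [mul_comm r, pow_mul]

/-! ### ZMod subgroup facts -/

lemma ofAdd_mul_mem {M : ℕ} [NeZero M] (I : Subgroup (Multiplicative (ZMod M)))
    (c : ZMod M) {x : ZMod M} (hx : ofAdd x ∈ I) : ofAdd (c * x) ∈ I := by
  have h : c * x = c.val • x := by
    rw [nsmul_eq_mul, ZMod.natCast_rightInverse c]
  rw [h, ofAdd_nsmul]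
  exact pow_mem hx c.val

lemma subgroup_eq_zpowers {p n : ℕ} (hp : p.Prime)
    (J : Subgroup (Multiplicative (ZMod (p^n)))) {d : ℕ} (hd : d ≤ n)
    (hcard : Nat.card J = p^d) :
    J = Subgroup.zpowers (ofAdd ((p^(n-d) : ℕ) : ZMod (p^n))) := by
  haveI : NeZero (p^n) := ⟨pow_ne_zero _ hp.ne_zero⟩
  set g : Multiplicative (ZMod (p^n)) := ofAdd ((p^(n-d) : ℕ) : ZMod (p^n)) with hg
  obtain ⟨w, hw⟩ := IsCyclic.exists_generator (α := J)
  have hJw : Subgroup.zpowers (w : Multiplicative (ZMod (p^n))) = J := by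
    refine le_antisymm (Subgroup.zpowers_le.mpr w.2) fun y hy => ?_
    obtain ⟨t, ht⟩ := Subgroup.mem_zpowers_iff.mp (hw ⟨y, hy⟩)
    exact Subgroup.mem_zpowers_iff.mpr ⟨t, congrArg Subtype.val ht⟩
  have hord : orderOf (w : Multiplicative (ZMod (p^n))) = p^d := by
    rw [← Nat.card_zpowers, hJw, hcard]
  set x : ZMod (p^n) := Multiplicative.toAdd (w : Multiplicative (ZMod (p^n))) with hx
  have hxw : (w : Multiplicative (ZMod (p^n))) = ofAdd x := rfl
  have haox : addOrderOf x = p^d := by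
    rw [← orderOf_ofAdd_eq_addOrderOf, ← hxw, hord]
  have hxval : ((x.val : ℕ) : ZMod (p^n)) = x := ZMod.natCast_rightInverse x
  have hgcd : Nat.gcd (p^n) x.val = p^(n-d) := by
    have h1 : addOrderOf ((x.val : ℕ) : ZMod (p^n)) = p^n / Nat.gcd (p^n) x.val :=
      ZMod.addOrderOf_coe x.val (pow_ne_zero _ hp.ne_zero)
    rw [hxval, haox] at h1
    have h2 : Nat.gcd (p^n) x.val * (p^n / Nat.gcd (p^n) x.val) = p^n :=
      Nat.mul_div_cancel' (Nat.gcd_dvd_left _ _)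
    rw [← h1] at h2
    have h3 : p^(n-d) * p^d = p^n := by rw [← pow_add]; congr 1; omega
    have h4 : (0:ℕ) < p^d := pow_pos hp.pos _
    exact Nat.eq_of_mul_eq_mul_right h4 (by rw [h2, ← h3])
  have hgmem : g ∈ Subgroup.zpowers (ofAdd x) := by
    have hbez := Nat.gcd_eq_gcd_ab (p^n) x.val
    have hc : ((p^(n-d) : ℕ) : ZMod (p^n)) = (Nat.gcdB (p^n) x.val : ℤ) • x := by
      have : (((Nat.gcd (p^n) x.val : ℕ) : ℤ) : ZMod (p^n))
          = ((p^n : ℕ) : ZMod (p^n)) * (Nat.gcdA (p^n) x.val : ℤ)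
            + ((x.val : ℕ) : ZMod (p^n)) * (Nat.gcdB (p^n) x.val : ℤ) := by
        rw [hbez]; push_cast; ring
      rw [ZMod.natCast_self, zero_mul, zero_add, hxval, hgcd] at this
      rw [zsmul_eq_mul, mul_comm]
      exact_mod_cast this
    rw [hg, hc, ofAdd_zsmul]
    exact Subgroup.mem_zpowers_iff.mpr ⟨_, rfl⟩
  have hordg : orderOf g = p^d := by
    rw [hg, orderOf_ofAdd_eq_addOrderOf,
      ZMod.addOrderOf_coe _ (pow_ne_zero _ hp.ne_zero),
      Nat.gcd_eq_right (pow_dvd_pow p (by omega : n - d ≤ n))]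
    rw [Nat.pow_div (by omega) hp.pos]
    congr 1; omega
  have hle : Subgroup.zpowers g ≤ J := by
    rw [← hJw, hxw]
    exact Subgroup.zpowers_le.mpr hgmem
  have hcards : Nat.card (Subgroup.zpowers g) = Nat.card J := by
    rw [Nat.card_zpowers, hordg, hcard]
  refine (SetLike.ext' ?_).symm
  refine Set.eq_of_subset_of_ncard_le hle ?_ (Set.toFinite _)
  rw [← Nat.card_coe_set_eq, ← Nat.card_coe_set_eq]
  simp only [SetLike.coe_sort_coe]
  rw [hcards]

/-! ### generic semidirect product facts -/

instance semidirect_finite {N G : Type*} [Group N] [Group G] [Finite N] [Finite G]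
    {φ : G →* MulAut N} : Finite (N ⋊[φ] G) :=
  Finite.of_surjective (fun x : N × G => ⟨x.1, x.2⟩) (fun g => ⟨(g.left, g.right), rfl⟩)

lemma card_subgroup_semidirect {N G : Type*} [Group N] [Group G] [Finite N] [Finite G]
    {φ : G →* MulAut N} (H : Subgroup (N ⋊[φ] G)) :
    Nat.card H = Nat.card (H.comap (inl (φ := φ)))
      * Nat.card (H.map (rightHom (φ := φ))) := by
  set f := (rightHom (φ := φ)).comp H.subtype with hf
  have h1 : Nat.card H = Nat.card (H ⧸ f.ker) * Nat.card f.ker :=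
    Subgroup.card_eq_card_quotient_mul_card_subgroup f.ker
  have h2 : Nat.card (H ⧸ f.ker) = Nat.card (H.map (rightHom (φ := φ))) := by
    rw [Nat.card_congr (QuotientGroup.quotientKerEquivRange f).toEquiv]
    congr 1
    rw [hf, MonoidHom.range_comp, Subgroup.range_subtype]
  have h3 : Nat.card f.ker = Nat.card (H.comap (inl (φ := φ))) := by
    refine Nat.card_congr ⟨fun y => ⟨y.1.1.left, ?_⟩, fun x => ⟨⟨⟨x.1, 1⟩, ?_⟩, ?_⟩, ?_, ?_⟩
    · have hy : (y.1.1 : N ⋊[φ] G) = inl y.1.1.left := by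
        have h : y.1.1.right = 1 := (MonoidHom.mem_ker.mp y.2 : f _ = 1)
        exact SemidirectProduct.ext rfl (by rw [h]; rfl)
      simp only [Subgroup.mem_comap]
      rw [← hy]
      exact y.1.2
    · exact x.2
    · show rightHom (⟨x.1, 1⟩ : N ⋊[φ] G) = 1
      rfl
    · intro y
      ext
      · rfl
      · exact ((MonoidHom.mem_ker.mp y.2 : f _ = 1)).symm
    · intro x
      rfl
  rw [h1, h2, h3, mul_comm]

lemma sdp_mul_inv_of_right_eq {N G : Type*} [Group N] [Group G]
    {φ : G →* MulAut N} (x y : N ⋊[φ] G) (h : x.right = y.right) :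
    x * y⁻¹ = inl (x.left * y.left⁻¹) := by
  refine SemidirectProduct.ext ?_ ?_
  · show x.left * φ x.right (φ y.right⁻¹ y.left⁻¹) = x.left * y.left⁻¹
    rw [h]
    congr 1
    have : φ y.right (φ y.right⁻¹ y.left⁻¹) = φ (y.right * y.right⁻¹) y.left⁻¹ := by
      rw [map_mul]; rfl
    rw [this, mul_inv_cancel, map_one]; rfl
  · show x.right * y.right⁻¹ = 1
    rw [h, mul_inv_cancel]

lemma subgroup_eq_of_le_of_card_le {G : Type*} [Group G] [Finite G] {K H : Subgroup G}
    (hle : K ≤ H) (hcard : Nat.card H ≤ Nat.card K) : K = H := by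
  refine SetLike.ext' ?_
  refine Set.eq_of_subset_of_ncard_le hle ?_ (Set.toFinite _)
  rw [← Nat.card_coe_set_eq, ← Nat.card_coe_set_eq]
  exact hcard

lemma sdp_conj {N G : Type*} [CommGroup N] [Group G]
    {φ : G →* MulAut N} (g : N ⋊[φ] G) (y : N) :
    g * inl y * g⁻¹ = inl (φ g.right y) := by
  refine SemidirectProduct.ext ?_ ?_
  · show (g.left * φ g.right ((inl y : N ⋊[φ] G).left)) * φ (g * inl y).right (φ g.right⁻¹ g.left⁻¹)
      = _
    have h1 : (g * inl y).right = g.right := by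
      show g.right * (inl y : N ⋊[φ] G).right = g.right
      rw [right_inl, mul_one]
    rw [h1, left_inl]
    have h2 : φ g.right (φ g.right⁻¹ g.left⁻¹) = g.left⁻¹ := by
      have : φ g.right (φ g.right⁻¹ g.left⁻¹) = φ (g.right * g.right⁻¹) g.left⁻¹ := by
        rw [map_mul]; rfl
      rw [this, mul_inv_cancel, map_one]; rfl
    rw [h2, left_inl, mul_comm g.left (φ g.right y), mul_assoc, mul_inv_cancel, mul_one]
  · show (g.right * (inl y : N ⋊[φ] G).right) * g.right⁻¹ = (inl (φ g.right y) : N ⋊[φ] G).right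
    rw [right_inl, right_inl, mul_one, mul_inv_cancel]

lemma metaPhi_apply (p m n k : ℕ) (hp : p.Prime)
    (hk : (k : ZMod (p ^ m)) ^ (p ^ n) = 1) (t : ℕ) (x : ZMod (p^m)) :
    metaPhi p m n k hp hk (Multiplicative.ofAdd ((t : ZMod (p^n)))) (Multiplicative.ofAdd x)
      = Multiplicative.ofAdd ((k:ZMod (p^m))^t * x) := by
  have key : ∀ (f : ZMod (p^n) →+ Additive (MulAut (Multiplicative (ZMod (p^m)))))
      (y : ZMod (p^n)),
      AddMonoidHom.toMultiplicativeLeft f (Multiplicative.ofAdd y) = (f y).toMul := fun f y => rfl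
  have h1 : ((t:ℕ) : ZMod (p^n)) = ((t:ℤ) : ZMod (p^n)) := by push_cast; rfl
  rw [h1]
  unfold metaPhi
  rw [key, ZMod.lift_coe]
  set u := (IsUnit.of_pow_eq_one hk (pow_ne_zero n hp.ne_zero)).unit with hu
  set J := ((addAutMulEquiv (ZMod (p ^ m))).toMonoidHom.comp
      (DistribMulAction.toAddAut (ZMod (p ^ m))ˣ (ZMod (p ^ m)))) with hJ
  rw [zmultiplesHom_apply, toMul_zsmul, toMul_ofMul, zpow_natCast, ← map_pow]
  show Multiplicative.ofAdd ((DistribMulAction.toAddAut (ZMod (p ^ m))ˣ (ZMod (p ^ m)) (u^t)) x)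
      = _
  have h3 : (DistribMulAction.toAddAut (ZMod (p ^ m))ˣ (ZMod (p ^ m)) (u^t)) x
      = ((u^t : (ZMod (p^m))ˣ) : ZMod (p^m)) * x := rfl
  rw [h3, Units.val_pow_eq_pow_val, IsUnit.unit_spec]

/-! ### the construction -/

noncomputable def gelt (p n d : ℕ) : Multiplicative (ZMod (p^n)) :=
  ofAdd ((p^(n-d) : ℕ) : ZMod (p^n))

lemma gelt_orderOf (p n : ℕ) (hp : p.Prime) {d : ℕ} (hd : d ≤ n) :
    orderOf (gelt p n d) = p^d := by
  haveI : NeZero (p^n) := ⟨pow_ne_zero _ hp.ne_zero⟩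
  rw [gelt, orderOf_ofAdd_eq_addOrderOf,
    ZMod.addOrderOf_coe _ (pow_ne_zero _ hp.ne_zero),
    Nat.gcd_eq_right (pow_dvd_pow p (by omega : n - d ≤ n))]
  rw [Nat.pow_div (by omega) hp.pos]
  congr 1; omega

variable (p m n k : ℕ) (hp : p.Prime) (hk : (k : ZMod (p ^ m)) ^ (p ^ n) = 1)

noncomputable def melt (s : ZMod (p^m)) (d : ℕ) : metaG p m n k hp hk :=
  ⟨ofAdd s, gelt p n d⟩

lemma melt_right (s : ZMod (p^m)) (d : ℕ) :
    SemidirectProduct.rightHom (melt p m n k hp hk s d) = gelt p n d := rfl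

lemma melt_pow (s : ZMod (p^m)) (d t : ℕ) :
    (melt p m n k hp hk s d)^t
      = ⟨ofAdd ((∑ r ∈ range t, (k:ZMod (p^m))^(r*p^(n-d))) * s),
          ofAdd ((t*(p^(n-d)) : ℕ) : ZMod (p^n))⟩ := by
  induction t with
  | zero =>
    refine SemidirectProduct.ext ?_ ?_ <;> simp [melt]
  | succ t ih =>
    rw [pow_succ, ih]
    refine SemidirectProduct.ext ?_ ?_
    · show ofAdd ((∑ r ∈ range t, (k:ZMod (p^m))^(r*p^(n-d))) * s)
        * metaPhi p m n k hp hk (ofAdd ((t*(p^(n-d)) : ℕ) : ZMod (p^n))) (ofAdd s) = _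
      rw [metaPhi_apply]
      show ofAdd ((∑ r ∈ range t, (k:ZMod (p^m))^(r*p^(n-d))) * s
          + (k:ZMod (p^m))^(t*(p^(n-d))) * s) = _
      rw [Finset.sum_range_succ, add_mul]
    · show ofAdd ((t*(p^(n-d)) : ℕ) : ZMod (p^n)) * ofAdd (((p^(n-d)) : ℕ) : ZMod (p^n)) = _
      show ofAdd (((t*(p^(n-d)) : ℕ) : ZMod (p^n)) + (((p^(n-d)) : ℕ) : ZMod (p^n))) = _
      congr 1
      push_cast
      ring

lemma phi_mem (I : Subgroup (Multiplicative (ZMod (p^m))))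
    (b : Multiplicative (ZMod (p^n))) {y : Multiplicative (ZMod (p^m))} (hy : y ∈ I) :
    metaPhi p m n k hp hk b y ∈ I := by
  haveI : NeZero (p^m) := ⟨pow_ne_zero _ hp.ne_zero⟩
  haveI : NeZero (p^n) := ⟨pow_ne_zero _ hp.ne_zero⟩
  have hb : b = ofAdd (((Multiplicative.toAdd b).val : ℕ) : ZMod (p^n)) := by
    rw [ZMod.natCast_rightInverse]
    rfl
  have hyy : y = ofAdd (Multiplicative.toAdd y) := rfl
  rw [hb, hyy, metaPhi_apply]
  exact ofAdd_mul_mem I _ hy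

lemma map_inl_normal (I : Subgroup (Multiplicative (ZMod (p^m)))) :
    ((I.map (inl : _ →* metaG p m n k hp hk))).Normal := by
  constructor
  intro x hx g
  obtain ⟨y, hy, rfl⟩ := hx
  rw [sdp_conj]
  exact Subgroup.mem_map_of_mem _ (phi_mem p m n k hp hk I _ hy)

noncomputable def Kgrp (I : Subgroup (Multiplicative (ZMod (p^m)))) (d : ℕ) (s : ZMod (p^m)) :
    Subgroup (metaG p m n k hp hk) :=
  (I.map inl) ⊔ Subgroup.zpowers (melt p m n k hp hk s d)

lemma Kgrp_map (I : Subgroup (Multiplicative (ZMod (p^m)))) (d : ℕ) (s : ZMod (p^m)) :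
    (Kgrp p m n k hp hk I d s).map SemidirectProduct.rightHom
      = Subgroup.zpowers (gelt p n d) := by
  rw [Kgrp, Subgroup.map_sup, MonoidHom.map_zpowers, melt_right, Subgroup.map_map,
    rightHom_comp_inl]
  have h1 : I.map (1 : Multiplicative (ZMod (p^m)) →* Multiplicative (ZMod (p^n))) = ⊥ := by
    refine le_antisymm ?_ bot_le
    rintro y ⟨x, hx, rfl⟩
    exact Subgroup.mem_bot.mpr rfl
  rw [h1, bot_sup_eq]

lemma mem_map_inl_iff (I : Subgroup (Multiplicative (ZMod (p^m))))
    (y : Multiplicative (ZMod (p^m))) :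
    (inl y : metaG p m n k hp hk) ∈ I.map inl ↔ y ∈ I := by
  constructor
  · rintro ⟨x, hx, hxy⟩
    rwa [← inl_injective hxy]
  · exact fun h => Subgroup.mem_map_of_mem _ h

lemma melt_pow_card_mem_iff (hodd : p ≠ 2) (hm : 1 ≤ m)
    (I : Subgroup (Multiplicative (ZMod (p^m)))) {d : ℕ} (hd : d ≤ n) (s : ZMod (p^m)) :
    ((melt p m n k hp hk s d)^(p^d) ∈ I.map (inl : _ →* metaG p m n k hp hk))
      ↔ ofAdd (((p^d : ℕ) : ZMod (p^m)) * s) ∈ I := by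
  haveI : NeZero (p^m) := ⟨pow_ne_zero _ hp.ne_zero⟩
  obtain ⟨u, hu⟩ := T_unit p m n (n-d) k hp hodd hm hk
  have hnd : n - (n - d) = d := by omega
  rw [hnd] at hu
  have hpow : (melt p m n k hp hk s d)^(p^d)
      = inl (ofAdd ((∑ r ∈ range (p^d), (k:ZMod (p^m))^(r*p^(n-d))) * s)) := by
    rw [melt_pow]
    refine SemidirectProduct.ext rfl ?_
    show ofAdd (((p^d*(p^(n-d)) : ℕ) : ZMod (p^n))) = 1
    have : ((p^d*(p^(n-d)) : ℕ) : ZMod (p^n)) = 0 := by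
      have hpn : p^d*(p^(n-d)) = p^n := by
        rw [← pow_add]; congr 1; omega
      rw [hpn, ZMod.natCast_self]
    rw [this]
    rfl
  rw [hpow, mem_map_inl_iff, hu]
  have hrw : (p:ZMod (p^m))^d * (u:ZMod (p^m)) * s
      = (u:ZMod (p^m)) * (((p^d : ℕ) : ZMod (p^m)) * s) := by push_cast; ring
  rw [hrw]
  constructor
  · intro h
    have := ofAdd_mul_mem I ((u⁻¹ : (ZMod (p^m))ˣ) : ZMod (p^m)) h
    rwa [← mul_assoc, Units.inv_mul, one_mul] at this
  · intro h
    exact ofAdd_mul_mem I _ h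

lemma Kgrp_comap (hodd : p ≠ 2) (hm : 1 ≤ m)
    (I : Subgroup (Multiplicative (ZMod (p^m)))) {d : ℕ} (hd : d ≤ n) (s : ZMod (p^m))
    (hs : ofAdd (((p^d : ℕ) : ZMod (p^m)) * s) ∈ I) :
    (Kgrp p m n k hp hk I d s).comap (inl : _ →* metaG p m n k hp hk) = I := by
  haveI : NeZero (p^n) := ⟨pow_ne_zero _ hp.ne_zero⟩
  refine le_antisymm ?_ ?_
  · intro y hy
    have hy' : (inl y : metaG p m n k hp hk) ∈ Kgrp p m n k hp hk I d s := hy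
    haveI hnorm := map_inl_normal p m n k hp hk I
    rw [Kgrp] at hy'
    have hmem : (inl y : metaG p m n k hp hk)
        ∈ ((I.map (inl : _ →* metaG p m n k hp hk) :
              Subgroup (metaG p m n k hp hk)) : Set (metaG p m n k hp hk))
          * ((Subgroup.zpowers (melt p m n k hp hk s d) :
              Subgroup (metaG p m n k hp hk)) : Set (metaG p m n k hp hk)) := by
      rw [← Subgroup.normal_mul]
      exact SetLike.mem_coe.mpr hy'
    obtain ⟨a, ha, b, hb, hab⟩ := Set.mem_mul.mp hmem
    obtain ⟨t, ht⟩ := Subgroup.mem_zpowers_iff.mp hb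
    have hra : SemidirectProduct.rightHom a = 1 := by
      obtain ⟨x, hx, rfl⟩ := ha
      exact rightHom_inl x
    have hgt : (gelt p n d)^t = 1 := by
      have h := congrArg (SemidirectProduct.rightHom (φ := metaPhi p m n k hp hk)) hab
      rw [map_mul, hra, one_mul, ← ht, map_zpow, melt_right, rightHom_inl] at h
      exact h
    have hdvd : ((p^d : ℕ) : ℤ) ∣ t := by
      have h2 : ((orderOf (gelt p n d) : ℕ) : ℤ) ∣ t := orderOf_dvd_iff_zpow_eq_one.mpr hgt
      rwa [gelt_orderOf p n hp hd] at h2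
    obtain ⟨w, hw⟩ := hdvd
    have hb' : b ∈ I.map (inl : _ →* metaG p m n k hp hk) := by
      rw [← ht, hw, zpow_mul, zpow_natCast]
      exact Subgroup.zpow_mem _
        ((melt_pow_card_mem_iff p m n k hp hk hodd hm I hd s).mpr hs) w
    have hyN : (inl y : metaG p m n k hp hk) ∈ I.map inl := by
      rw [← hab]
      exact Subgroup.mul_mem _ ha hb'
    exact (mem_map_inl_iff p m n k hp hk I y).mp hyN
  · intro y hy
    exact Subgroup.mem_comap.mpr (le_sup_left (a := I.map inl)
      (Subgroup.mem_map_of_mem _ hy))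

lemma Kgrp_card (hodd : p ≠ 2) (hm : 1 ≤ m)
    (I : Subgroup (Multiplicative (ZMod (p^m)))) {d : ℕ} (hd : d ≤ n) (s : ZMod (p^m))
    (hs : ofAdd (((p^d : ℕ) : ZMod (p^m)) * s) ∈ I) :
    Nat.card (Kgrp p m n k hp hk I d s) = Nat.card I * p^d := by
  haveI : NeZero (p^m) := ⟨pow_ne_zero _ hp.ne_zero⟩
  haveI : NeZero (p^n) := ⟨pow_ne_zero _ hp.ne_zero⟩
  rw [card_subgroup_semidirect, Kgrp_comap p m n k hp hk hodd hm I hd s hs,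
    Kgrp_map, Nat.card_zpowers, gelt_orderOf p n hp hd]

lemma mem_pd (hodd : p ≠ 2) (hm : 1 ≤ m) (H : Subgroup (metaG p m n k hp hk)) {d : ℕ}
    (hd : d ≤ n) (s : ZMod (p^m)) (hmem : melt p m n k hp hk s d ∈ H) :
    ofAdd (((p^d : ℕ) : ZMod (p^m)) * s) ∈ H.comap (inl : _ →* metaG p m n k hp hk) := by
  haveI : NeZero (p^m) := ⟨pow_ne_zero _ hp.ne_zero⟩
  haveI : NeZero (p^n) := ⟨pow_ne_zero _ hp.ne_zero⟩
  have hpowH : (melt p m n k hp hk s d)^(p^d)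
      ∈ (H.comap (inl : _ →* metaG p m n k hp hk)).map inl := by
    rw [Subgroup.map_comap_eq]
    refine Subgroup.mem_inf.mpr ⟨?_, pow_mem hmem _⟩
    rw [range_inl_eq_ker_rightHom]
    refine MonoidHom.mem_ker.mpr ?_
    rw [map_pow, melt_right, ← gelt_orderOf p n hp hd, pow_orderOf_eq_one]
  exact (melt_pow_card_mem_iff p m n k hp hk hodd hm _ hd s).mp hpowH

lemma recon (hodd : p ≠ 2) (hm : 1 ≤ m) (H : Subgroup (metaG p m n k hp hk)) {d : ℕ}
    (hd : d ≤ n)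
    (hJ : H.map SemidirectProduct.rightHom = Subgroup.zpowers (gelt p n d))
    (s : ZMod (p^m)) (hmem : melt p m n k hp hk s d ∈ H) :
    H = Kgrp p m n k hp hk (H.comap inl) d s := by
  haveI : NeZero (p^m) := ⟨pow_ne_zero _ hp.ne_zero⟩
  haveI : NeZero (p^n) := ⟨pow_ne_zero _ hp.ne_zero⟩
  have hs := mem_pd p m n k hp hk hodd hm H hd s hmem
  have hle : Kgrp p m n k hp hk (H.comap inl) d s ≤ H :=
    sup_le (Subgroup.map_comap_le _ _) (Subgroup.zpowers_le.mpr hmem)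
  refine (subgroup_eq_of_le_of_card_le hle ?_).symm
  rw [Kgrp_card p m n k hp hk hodd hm _ hd s hs, card_subgroup_semidirect H, hJ,
    Nat.card_zpowers, gelt_orderOf p n hp hd]

noncomputable def dOf (H : Subgroup (metaG p m n k hp hk)) : ℕ :=
  (Nat.card (H.map (SemidirectProduct.rightHom))).factorization p

noncomputable def pickElt (H : Subgroup (metaG p m n k hp hk)) : metaG p m n k hp hk := by
  classical
  exact if h : ∃ x, x ∈ H ∧ SemidirectProduct.rightHom x = gelt p n (dOf p m n k hp hk H)
    then h.choose else 1

lemma H_facts (H : Subgroup (metaG p m n k hp hk)) :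
    dOf p m n k hp hk H ≤ n
    ∧ H.map SemidirectProduct.rightHom = Subgroup.zpowers (gelt p n (dOf p m n k hp hk H))
    ∧ pickElt p m n k hp hk H ∈ H
    ∧ SemidirectProduct.rightHom (pickElt p m n k hp hk H) = gelt p n (dOf p m n k hp hk H) := by
  haveI : NeZero (p^m) := ⟨pow_ne_zero _ hp.ne_zero⟩
  haveI : NeZero (p^n) := ⟨pow_ne_zero _ hp.ne_zero⟩
  have hdvd : Nat.card (H.map (SemidirectProduct.rightHom)) ∣ p^n := by
    have h1 := Subgroup.card_subgroup_dvd_card (H.map (SemidirectProduct.rightHom))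
    rwa [Nat.card_congr Multiplicative.toAdd, Nat.card_zmod] at h1
  obtain ⟨e, he, hcard⟩ := (Nat.dvd_prime_pow hp).mp hdvd
  have hde : dOf p m n k hp hk H = e := by
    rw [dOf, hcard]
    simp [hp.factorization_pow]
  have hdn : dOf p m n k hp hk H ≤ n := hde ▸ he
  have hJ : H.map SemidirectProduct.rightHom
      = Subgroup.zpowers (gelt p n (dOf p m n k hp hk H)) := by
    rw [hde]
    exact subgroup_eq_zpowers hp _ he hcard
  have hex : ∃ x, x ∈ H ∧ SemidirectProduct.rightHom x = gelt p n (dOf p m n k hp hk H) := by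
    have : gelt p n (dOf p m n k hp hk H) ∈ H.map SemidirectProduct.rightHom := by
      rw [hJ]
      exact Subgroup.mem_zpowers _
    obtain ⟨x, hx, hxe⟩ := this
    exact ⟨x, hx, hxe⟩
  have hpick : pickElt p m n k hp hk H ∈ H
      ∧ SemidirectProduct.rightHom (pickElt p m n k hp hk H)
        = gelt p n (dOf p m n k hp hk H) := by
    rw [pickElt, dif_pos hex]
    exact hex.choose_spec
  exact ⟨hdn, hJ, hpick.1, hpick.2⟩

lemma pickElt_eq_melt (H : Subgroup (metaG p m n k hp hk)) :
    pickElt p m n k hp hk H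
      = melt p m n k hp hk (Multiplicative.toAdd (pickElt p m n k hp hk H).left)
          (dOf p m n k hp hk H) := by
  refine SemidirectProduct.ext rfl ?_
  exact (H_facts p m n k hp hk H).2.2.2

lemma inl_mul_mk (y a : Multiplicative (ZMod (p^m))) (b : Multiplicative (ZMod (p^n))) :
    (inl y : metaG p m n k hp hk) * ⟨a, b⟩ = ⟨y * a, b⟩ := by
  refine SemidirectProduct.ext ?_ ?_
  · show y * (metaPhi p m n k hp hk 1 a) = y * a
    rw [map_one]
    rfl
  · show 1 * b = b
    rw [one_mul]

noncomputable def Fmap (p m n k₁ k₂ : ℕ) (hp : p.Prime)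
    (h₁ : (k₁ : ZMod (p ^ m)) ^ (p ^ n) = 1) (h₂ : (k₂ : ZMod (p ^ m)) ^ (p ^ n) = 1)
    (H : Subgroup (metaG p m n k₁ hp h₁)) : Subgroup (metaG p m n k₂ hp h₂) :=
  Kgrp p m n k₂ hp h₂ (H.comap inl) (dOf p m n k₁ hp h₁ H)
    (Multiplicative.toAdd (pickElt p m n k₁ hp h₁ H).left)

lemma Fmap_basic (p m n k₁ k₂ : ℕ) (hp : p.Prime) (hodd : p ≠ 2) (hm : 1 ≤ m)
    (h₁ : (k₁ : ZMod (p ^ m)) ^ (p ^ n) = 1) (h₂ : (k₂ : ZMod (p ^ m)) ^ (p ^ n) = 1)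
    (H : Subgroup (metaG p m n k₁ hp h₁)) :
    (Fmap p m n k₁ k₂ hp h₁ h₂ H).comap inl = H.comap inl
    ∧ Nat.card (Fmap p m n k₁ k₂ hp h₁ h₂ H) = Nat.card H
    ∧ dOf p m n k₂ hp h₂ (Fmap p m n k₁ k₂ hp h₁ h₂ H) = dOf p m n k₁ hp h₁ H := by
  haveI : NeZero (p^m) := ⟨pow_ne_zero _ hp.ne_zero⟩
  haveI : NeZero (p^n) := ⟨pow_ne_zero _ hp.ne_zero⟩
  obtain ⟨hd, hJ, hpmem, hpr⟩ := H_facts p m n k₁ hp h₁ H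
  set d := dOf p m n k₁ hp h₁ H with hdd
  set s := Multiplicative.toAdd (pickElt p m n k₁ hp h₁ H).left with hss
  have hmem : melt p m n k₁ hp h₁ s d ∈ H := by
    rw [← pickElt_eq_melt]
    exact hpmem
  have hs := mem_pd p m n k₁ hp h₁ hodd hm H hd s hmem
  have ha : (Fmap p m n k₁ k₂ hp h₁ h₂ H).comap inl = H.comap inl :=
    Kgrp_comap p m n k₂ hp h₂ hodd hm _ hd s hs
  have hb : (Fmap p m n k₁ k₂ hp h₁ h₂ H).map SemidirectProduct.rightHom
      = Subgroup.zpowers (gelt p n d) := Kgrp_map p m n k₂ hp h₂ _ d s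
  have hcardH : Nat.card H = Nat.card (H.comap (inl : _ →* metaG p m n k₁ hp h₁)) * p^d := by
    rw [card_subgroup_semidirect H, hJ, Nat.card_zpowers, gelt_orderOf p n hp hd]
  have hc : Nat.card (Fmap p m n k₁ k₂ hp h₁ h₂ H) = Nat.card H := by
    rw [hcardH, Fmap, Kgrp_card p m n k₂ hp h₂ hodd hm _ hd s hs]
  have hdK : dOf p m n k₂ hp h₂ (Fmap p m n k₁ k₂ hp h₁ h₂ H) = d := by
    rw [dOf, hb, Nat.card_zpowers, gelt_orderOf p n hp hd]
    simp [hp.factorization_pow]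
  exact ⟨ha, hc, hdK⟩

lemma Fmap_inv (p m n k₁ k₂ : ℕ) (hp : p.Prime) (hodd : p ≠ 2) (hm : 1 ≤ m)
    (h₁ : (k₁ : ZMod (p ^ m)) ^ (p ^ n) = 1) (h₂ : (k₂ : ZMod (p ^ m)) ^ (p ^ n) = 1)
    (H : Subgroup (metaG p m n k₁ hp h₁)) :
    Fmap p m n k₂ k₁ hp h₂ h₁ (Fmap p m n k₁ k₂ hp h₁ h₂ H) = H := by
  haveI : NeZero (p^m) := ⟨pow_ne_zero _ hp.ne_zero⟩
  haveI : NeZero (p^n) := ⟨pow_ne_zero _ hp.ne_zero⟩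
  obtain ⟨hd, hJ, hpmem, hpr⟩ := H_facts p m n k₁ hp h₁ H
  obtain ⟨ha, hc, hdK⟩ := Fmap_basic p m n k₁ k₂ hp hodd hm h₁ h₂ H
  set d := dOf p m n k₁ hp h₁ H with hdd
  set s := Multiplicative.toAdd (pickElt p m n k₁ hp h₁ H).left with hss
  set K := Fmap p m n k₁ k₂ hp h₁ h₂ H with hK
  obtain ⟨hdK', hJK, hpmemK, hprK⟩ := H_facts p m n k₂ hp h₂ K
  set s' := Multiplicative.toAdd (pickElt p m n k₂ hp h₂ K).left with hss'
  set h' := pickElt p m n k₂ hp h₂ K with hh'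
  have hmem1 : melt p m n k₁ hp h₁ s d ∈ H := by
    rw [← pickElt_eq_melt]; exact hpmem
  -- the element z
  have hz1 : h' * (melt p m n k₂ hp h₂ s d)⁻¹
      = inl (h'.left * (ofAdd s)⁻¹) := by
    refine sdp_mul_inv_of_right_eq _ _ ?_
    show SemidirectProduct.rightHom h' = _
    rw [hprK, hdK]
    rfl
  have hmeltK : melt p m n k₂ hp h₂ s d ∈ K := by
    rw [hK, Fmap]
    exact le_sup_right (α := Subgroup (metaG p m n k₂ hp h₂)) (Subgroup.mem_zpowers _)
  have hzK : (inl (h'.left * (ofAdd s)⁻¹) : metaG p m n k₂ hp h₂) ∈ K := by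
    rw [← hz1]
    exact Subgroup.mul_mem _ hpmemK (Subgroup.inv_mem _ hmeltK)
  have hzI : h'.left * (ofAdd s)⁻¹ ∈ H.comap (inl : _ →* metaG p m n k₁ hp h₁) := by
    rw [← ha]
    exact Subgroup.mem_comap.mpr hzK
  have hmem' : melt p m n k₁ hp h₁ s' d ∈ H := by
    have heq : melt p m n k₁ hp h₁ s' d
        = (inl (h'.left * (ofAdd s)⁻¹) : metaG p m n k₁ hp h₁)
          * melt p m n k₁ hp h₁ s d := by
      rw [melt, melt, inl_mul_mk]
      refine SemidirectProduct.ext ?_ rfl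
      show ofAdd s' = h'.left * (ofAdd s)⁻¹ * ofAdd s
      rw [inv_mul_cancel_right]
      rfl
    rw [heq]
    exact Subgroup.mul_mem _ (Subgroup.mem_comap.mp hzI) hmem1
  have hrec := recon p m n k₁ hp h₁ hodd hm H hd hJ s' hmem'
  rw [Fmap, ha, hdK, ← hss']
  exact hrec.symm

/-- For odd primes `p`, all valid `G(p,m,n,k)` have the same group zeta
function. -/
theorem metaG_zeta_eq_of_odd (p m n k₁ k₂ : ℕ) (hp : p.Prime) (hodd : p ≠ 2)
    (hm : 1 ≤ m) (hn : 1 ≤ n)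
    (h₁ : (k₁ : ZMod (p ^ m)) ^ (p ^ n) = 1) (h₂ : (k₂ : ZMod (p ^ m)) ^ (p ^ n) = 1) :
    ∀ N : ℕ, 1 ≤ N →
      subCount (metaG p m n k₁ hp h₁) N = subCount (metaG p m n k₂ hp h₂) N := by
  intro N _
  refine Nat.card_congr ?_
  refine ⟨fun H => ⟨Fmap p m n k₁ k₂ hp h₁ h₂ H.1, ?_⟩,
    fun H => ⟨Fmap p m n k₂ k₁ hp h₂ h₁ H.1, ?_⟩, fun H => ?_, fun H => ?_⟩
  · rw [(Fmap_basic p m n k₁ k₂ hp hodd hm h₁ h₂ H.1).2.1]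
    exact H.2
  · rw [(Fmap_basic p m n k₂ k₁ hp hodd hm h₂ h₁ H.1).2.1]
    exact H.2
  · exact Subtype.ext (Fmap_inv p m n k₁ k₂ hp hodd hm h₁ h₂ H.1)
  · exact Subtype.ext (Fmap_inv p m n k₂ k₁ hp hodd hm h₂ h₁ H.1)
end

section
/- Let m, n ≥ 1 with n ≥ m. Then for any natural numbers k₁, k₂ satisfying k₁^{2^n} ≡ 1 (mod 2^m) and k₂^{2^n} ≡ 1 (mod 2^m), and for every natural number N ≥ 1, the number of subgroups of order N of G(2,m,n,k₁) equals the number of subgroups of order N of G(2,m,n,k₂); that is, the two groups have the same group zeta function. -/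
open Finset AddSubgroup Multiplicative



lemma geom_sum_eq_prod (x r : ℕ) :
    ∑ l ∈ range (2^r), x^l = ∏ s ∈ range r, (1 + x^(2^s)) := by
  induction r with
  | zero => simp
  | succ r ih =>
    rw [prod_range_succ, ← ih, pow_succ]
    have h2 : 2^r*2 = 2^r + 2^r := by ring
    rw [h2, Finset.sum_range_add]
    have h3 : ∑ l ∈ range (2^r), x^(2^r + l) = (∑ l ∈ range (2^r), x^l) * x^(2^r) := by
      rw [Finset.sum_mul]
      exact Finset.sum_congr rfl fun l _ => by rw [pow_add, mul_comm]
    rw [h3]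
    ring
  
lemma snat_eq (k γ e : ℕ) (hk : Odd k) :
    ∃ c : ℕ, (∑ l ∈ range (2^e), k^(γ*l)) = 2^e * c ∧ (2 ∣ γ → Odd c) := by
  have hsum : ∑ l ∈ range (2^e), k^(γ*l) = ∏ s ∈ range e, (1 + (k^γ)^(2^s)) := by
    rw [← geom_sum_eq_prod]
    exact Finset.sum_congr rfl fun l _ => by rw [pow_mul]
  have hfac : ∀ s : ℕ, ∃ c : ℕ, 1 + (k^γ)^(2^s) = 2 * c ∧ (2 ∣ γ → Odd c) := by
    intro s
    have hodd : Odd ((k^γ)^(2^s)) := (hk.pow).pow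
    obtain ⟨a, ha⟩ := hodd
    refine ⟨a + 1, by omega, ?_⟩
    rintro ⟨γ', rfl⟩
    have hk2 : k^2 % 4 = 1 := by
      obtain ⟨b, rfl⟩ := hk
      have : (2*b+1)^2 = 4*(b*b+b) + 1 := by ring
      omega
    have hmod : (k ^ (2 * γ')) ^ 2 ^ s % 4 = 1 := by
      have : (k ^ (2 * γ')) ^ 2 ^ s = (k^2)^(γ' * 2^s) := by
        rw [← pow_mul, ← pow_mul]; ring_nf
      rw [this]
      have := Nat.pow_mod (k^2) (γ' * 2^s) 4
      rw [hk2, one_pow] at this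
      omega
    rw [Nat.odd_iff]
    omega
  choose c hc hcodd using hfac
  refine ⟨∏ s ∈ range e, c s, ?_, ?_⟩
  · rw [hsum]
    rw [Finset.prod_congr rfl fun s _ => hc s, Finset.prod_mul_distrib, Finset.prod_const]
    congr 1
    simp [Finset.card_range]
  · intro hγ
    refine Finset.prod_induction c Odd (fun a b => Odd.mul) odd_one fun s _ => hcodd s hγ


lemma zmultiples_natCast_gcd (N : ℕ) [NeZero N] (u : ℕ) :
    zmultiples ((u : ZMod N)) = zmultiples ((N.gcd u : ℕ) : ZMod N) := by
  apply le_antisymm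
  · rw [zmultiples_le]
    refine ⟨((u / N.gcd u : ℕ) : ℤ), ?_⟩
    show ((u / N.gcd u : ℕ) : ℤ) • ((N.gcd u : ℕ) : ZMod N) = (u : ZMod N)
    rw [natCast_zsmul, nsmul_eq_mul]
    rw [← Nat.cast_mul, Nat.div_mul_cancel (Nat.gcd_dvd_right N u)]
  · rw [zmultiples_le]
    refine ⟨Nat.gcdB N u, ?_⟩
    show Nat.gcdB N u • ((u : ℕ) : ZMod N) = ((N.gcd u : ℕ) : ZMod N)
    have h := Nat.gcd_eq_gcd_ab N u
    rw [zsmul_eq_mul]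
    have : ((N.gcd u : ℤ) : ZMod N) = ((N * Nat.gcdA N u + u * Nat.gcdB N u : ℤ) : ZMod N) := by
      rw [← h]
    push_cast at this ⊢
    rw [this]
    simp [mul_comm]

lemma mem_zmultiples_natCast_iff (N : ℕ) [NeZero N] (g : ℕ) (hg : g ∣ N) (b : ZMod N) :
    b ∈ zmultiples ((g : ℕ) : ZMod N) ↔ g ∣ b.val := by
  constructor
  · rintro ⟨z, rfl⟩
    show g ∣ (z • ((g : ℕ) : ZMod N)).val
    set s : ℕ := (z % (N : ℤ)).toNat with hs
    have hzN : z • ((g : ℕ) : ZMod N) = s • ((g : ℕ) : ZMod N) := by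
      have h1 : (s : ℤ) = z % (N : ℤ) := Int.toNat_of_nonneg (Int.emod_nonneg z (by exact_mod_cast (NeZero.ne N)))
      rw [← natCast_zsmul, h1]
      have : z = z % N + N * (z / N) := (Int.emod_add_mul_ediv z N).symm
      conv_lhs => rw [this]
      rw [add_zsmul, mul_comm, mul_zsmul]
      have hN0 : (N : ℤ) • ((g : ℕ) : ZMod N) = 0 := by
        rw [natCast_zsmul, nsmul_eq_mul]; simp
      rw [hN0, smul_zero, add_zero]
    rw [hzN, nsmul_eq_mul, ← Nat.cast_mul, ZMod.val_natCast]
    exact (Nat.dvd_mod_iff hg).mpr ⟨s, mul_comm g s ▸ rfl⟩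
  · intro h
    obtain ⟨w, hw⟩ := h
    refine ⟨(w : ℤ), ?_⟩
    show (w : ℤ) • ((g : ℕ) : ZMod N) = b
    rw [natCast_zsmul, nsmul_eq_mul, ← Nat.cast_mul, mul_comm, ← hw]
    exact ZMod.natCast_rightInverse b

lemma addsubgroup_zmod_exists_gen (N : ℕ) [NeZero N] (J : AddSubgroup (ZMod N)) :
    ∃ x : ZMod N, J = zmultiples x := by
  obtain ⟨⟨x, hxJ⟩, hgen⟩ := IsAddCyclic.exists_generator (α := J)
  refine ⟨x, le_antisymm ?_ ?_⟩
  · intro y hy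
    obtain ⟨z, hz⟩ := hgen ⟨y, hy⟩
    exact ⟨z, congrArg Subtype.val hz⟩
  · rw [zmultiples_le]; exact hxJ

/-- Main classification: membership in an additive subgroup of `ZMod N`. -/
lemma zmod_mem_addSubgroup_iff (N : ℕ) [NeZero N] (J : AddSubgroup (ZMod N)) (b : ZMod N) :
    b ∈ J ↔ (N / Nat.card J) ∣ b.val := by
  obtain ⟨x, rfl⟩ := addsubgroup_zmod_exists_gen N J
  have hx : x = ((x.val : ℕ) : ZMod N) := (ZMod.natCast_rightInverse x).symm
  set g : ℕ := N.gcd x.val with hg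
  have hgdvd : g ∣ N := Nat.gcd_dvd_left N x.val
  have hJ : zmultiples x = zmultiples ((g : ℕ) : ZMod N) := by
    rw [hx]; exact zmultiples_natCast_gcd N x.val
  have hgpos : 0 < g := Nat.gcd_pos_of_pos_left _ (Nat.pos_of_ne_zero (NeZero.ne N))
  have hcard : Nat.card (zmultiples x) = N / g := by
    rw [hJ, Nat.card_zmultiples, ZMod.addOrderOf_coe g (NeZero.ne N), Nat.gcd_eq_right hgdvd]
  rw [hcard, Nat.div_div_self hgdvd (NeZero.ne N), hJ]
  exact mem_zmultiples_natCast_iff N g hgdvd b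


instance two_pow_neZero (m : ℕ) : NeZero (2^m) := ⟨pow_ne_zero _ two_ne_zero⟩

/-- coefficient sums -/
def KC (k γ s : ℕ) : ℕ := ∑ l ∈ Finset.range s, k^(γ*l)

lemma KC_zero (k γ : ℕ) : KC k γ 0 = 0 := by simp [KC]

lemma KC_one (k γ : ℕ) : KC k γ 1 = 1 := by simp [KC]

lemma KC_add (k γ s₁ s₂ : ℕ) : KC k γ (s₁ + s₂) = KC k γ s₁ + k^(γ*s₁) * KC k γ s₂ := by
  unfold KC
  rw [Finset.sum_range_add, Finset.mul_sum]
  congr 1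
  exact Finset.sum_congr rfl fun l _ => by rw [← pow_add, ← mul_add]

section Basic

variable {m n k : ℕ}

lemma k_odd (hm : 1 ≤ m) (hk : (k : ZMod (2 ^ m)) ^ (2 ^ n) = 1) : Odd k := by
  have hdvd : (2:ℕ) ∣ 2^m := dvd_pow_self 2 (by omega)
  have h2 : ((k : ZMod 2))^(2^n) = 1 := by
    have := congrArg (ZMod.castHom hdvd (ZMod 2)) hk
    rw [map_pow, map_natCast, map_one] at this
    exact this
  rw [Nat.odd_iff]
  by_contra h
  have hk2 : (k : ZMod 2) = 0 := by
    have h0 : k % 2 = 0 := by omega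
    rw [← ZMod.natCast_mod, h0, Nat.cast_zero]
  rw [hk2, zero_pow (pow_ne_zero _ two_ne_zero)] at h2
  exact absurd h2 (by decide)

lemma kpow_congr (hk : (k : ZMod (2 ^ m)) ^ (2 ^ n) = 1) {c₁ c₂ : ℕ}
    (h : c₁ ≡ c₂ [MOD 2^n]) : (k : ZMod (2^m))^c₁ = (k : ZMod (2^m))^c₂ := by
  wlog hle : c₁ ≤ c₂ generalizing c₁ c₂
  · exact (this h.symm (by omega)).symm
  obtain ⟨q, hq⟩ := (Nat.modEq_iff_dvd' hle).mp h
  have : c₂ = c₁ + 2^n * q := by omega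
  rw [this, pow_add, pow_mul, hk, one_pow, mul_one]

lemma KC_congr (hk : (k : ZMod (2 ^ m)) ^ (2 ^ n) = 1) {γ γ' : ℕ} (s : ℕ)
    (h : γ ≡ γ' [MOD 2^n]) : KC k γ s ≡ KC k γ' s [MOD 2^m] := by
  have : ((KC k γ s : ℕ) : ZMod (2^m)) = ((KC k γ' s : ℕ) : ZMod (2^m)) := by
    unfold KC
    push_cast
    exact Finset.sum_congr rfl fun l _ => kpow_congr hk (h.mul_right l)
  exact (ZMod.natCast_eq_natCast_iff _ _ _).mp this

end Basic


section Quot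

variable {m : ℕ} {I : AddSubgroup (ZMod (2^m))}

lemma qsmul_two_pow (t : ZMod (2^m) ⧸ I) : (2^m) • t = 0 := by
  induction t using QuotientAddGroup.induction_on with
  | H x =>
    rw [← QuotientAddGroup.mk_nsmul]
    have : (2^m) • x = 0 := by
      rw [nsmul_eq_mul]
      simp
    rw [this, QuotientAddGroup.mk_zero]

lemma qsmul_mul_two_pow (q : ℕ) (t : ZMod (2^m) ⧸ I) : (2^m * q) • t = 0 := by
  rw [mul_comm, ← smul_smul, qsmul_two_pow, smul_zero]

lemma qsmul_congr {c₁ c₂ : ℕ} (h : c₁ ≡ c₂ [MOD 2^m]) (t : ZMod (2^m) ⧸ I) :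
    c₁ • t = c₂ • t := by
  wlog hle : c₁ ≤ c₂ generalizing c₁ c₂
  · exact (this h.symm (by omega)).symm
  obtain ⟨q, hq⟩ := (Nat.modEq_iff_dvd' hle).mp h
  have h2 : c₂ = c₁ + 2^m * q := by omega
  rw [h2, add_nsmul, qsmul_mul_two_pow, add_zero]

end Quot

section KCSmul

variable {m n k : ℕ}

/-- Main number-theoretic equivalence : `KC k γ d • t = 0 ↔ d • t = 0`. -/
lemma KC_smul_iff (hm : 1 ≤ m) (hmn : m ≤ n) (hkodd : Odd k)
    {I : AddSubgroup (ZMod (2^m))} (t : ZMod (2^m) ⧸ I) {d γ : ℕ}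
    (hγd : γ * d = 2^n) : (KC k γ d) • t = 0 ↔ d • t = 0 := by
  have hd2 : d ∣ 2^n := Dvd.intro_left γ hγd
  have hγ2 : γ ∣ 2^n := Dvd.intro d hγd
  obtain ⟨e, he, rfl⟩ := (Nat.dvd_prime_pow Nat.prime_two).mp hd2
  obtain ⟨c, hc, hcodd⟩ := snat_eq k γ e hkodd
  have hKC : KC k γ (2^e) = 2^e * c := hc
  constructor
  · intro h0
    rcases eq_or_ne γ 1 with hγ1 | hγ1
    · -- d = 2^n, kill by 2^m
      have hde : (2:ℕ)^e = 2^n := by rw [hγ1, one_mul] at hγd; exact hγd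
      have he' : e = n := Nat.pow_right_injective (by norm_num) hde
      have hd : (2:ℕ)^e = 2^m * 2^(n-m) := by
        rw [← pow_add]
        congr 1
        omega
      rw [hd]
      exact qsmul_mul_two_pow _ t
    · -- γ even, c odd
      have hγeven : 2 ∣ γ := by
        obtain ⟨j, hj, rfl⟩ := (Nat.dvd_prime_pow Nat.prime_two).mp hγ2
        have : j ≠ 0 := fun h => hγ1 (by simp [h])
        exact dvd_pow_self 2 this
      have hcO := hcodd hγeven
      have hc1 : c % 2 = 1 := Nat.odd_iff.mp hcO
      have h2m : 1 < 2^m := by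
        have : (2:ℕ)^1 ≤ 2^m := Nat.pow_le_pow_right (by omega) hm
        omega
      have hcop : Nat.Coprime c (2^m) := Nat.Coprime.pow_right _ (by
        have : ¬ (2 ∣ c) := by
          rw [Nat.dvd_iff_mod_eq_zero]
          omega
        exact Nat.coprime_comm.mp ((Nat.prime_two.coprime_iff_not_dvd).mpr this))
      obtain ⟨c', -, hc'⟩ := Nat.exists_mul_mod_eq_one_of_coprime hcop h2m
      have hmodeq : (2^e : ℕ) ≡ 2^e * (c * c') [MOD 2^m] := by
        conv_lhs => rw [← mul_one (2^e)]
        refine Nat.ModEq.mul_left _ ?_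
        show 1 % 2^m = (c * c') % 2^m
        rw [hc', Nat.mod_eq_of_lt h2m]
      calc (2^e : ℕ) • t = (2^e * (c * c')) • t := qsmul_congr hmodeq t
        _ = (c' * (2^e * c)) • t := by ring_nf
        _ = c' • (KC k γ (2^e) • t) := by rw [smul_smul, hKC]
        _ = 0 := by rw [h0, smul_zero]
  · intro h0
    rw [hKC, mul_comm, ← smul_smul, h0, smul_zero]

end KCSmul

variable {m n k : ℕ}

lemma phi_one (hk : (k : ZMod (2 ^ m)) ^ (2 ^ n) = 1) (a : ZMod (2^m)) :
    metaPhi 2 m n k Nat.prime_two hk (ofAdd (1 : ZMod (2^n))) (ofAdd a)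
      = ofAdd ((k : ZMod (2^m)) * a) := by
  unfold metaPhi
  simp only [AddMonoidHom.coe_toMultiplicativeLeft, Function.comp_apply]
  have h1 : (ofAdd (1 : ZMod (2^n))).toAdd = (((1:ℤ) : ZMod (2^n))) := by simp
  rw [h1, ZMod.lift_coe]
  simp only [zmultiplesHom_apply, one_zsmul]
  rfl

lemma phi_one_pow (hk : (k : ZMod (2 ^ m)) ^ (2 ^ n) = 1) (c : ℕ) (a : ZMod (2^m)) :
    ((metaPhi 2 m n k Nat.prime_two hk (ofAdd (1 : ZMod (2^n))))^c) (ofAdd a)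
      = ofAdd ((k : ZMod (2^m))^c * a) := by
  induction c generalizing a with
  | zero => simp
  | succ c ih =>
    rw [pow_succ, MulAut.mul_apply, phi_one hk a, ih]
    congr 1
    ring

lemma phi_apply (hk : (k : ZMod (2 ^ m)) ^ (2 ^ n) = 1) (b : Multiplicative (ZMod (2^n)))
    (a : ZMod (2^m)) :
    metaPhi 2 m n k Nat.prime_two hk b (ofAdd a)
      = ofAdd ((k : ZMod (2^m)) ^ (Multiplicative.toAdd b).val * a) := by
  have hb : b = (ofAdd (1 : ZMod (2^n)))^((Multiplicative.toAdd b).val) := by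
    rw [← ofAdd_nsmul]
    rw [nsmul_eq_mul, mul_one]
    rw [ZMod.natCast_rightInverse (Multiplicative.toAdd b)]
    rfl
  conv_lhs => rw [hb]
  rw [map_pow]
  exact phi_one_pow hk _ a

section GroupFacts

variable {m n k : ℕ}

/-- Shorthand for making elements of the semidirect product. -/
def mkG (hk : (k : ZMod (2 ^ m)) ^ (2 ^ n) = 1) (x : ZMod (2^m)) (y : ZMod (2^n)) :
    metaG 2 m n k Nat.prime_two hk :=
  ⟨ofAdd x, ofAdd y⟩

@[simp] lemma mkG_left (hk : (k : ZMod (2 ^ m)) ^ (2 ^ n) = 1) (x y) :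
    (mkG hk x y).left = ofAdd x := rfl

@[simp] lemma mkG_right (hk : (k : ZMod (2 ^ m)) ^ (2 ^ n) = 1) (x y) :
    (mkG hk x y).right = ofAdd y := rfl

lemma mkG_eta (hk : (k : ZMod (2 ^ m)) ^ (2 ^ n) = 1) (g : metaG 2 m n k Nat.prime_two hk) :
    mkG hk (toAdd g.left) (toAdd g.right) = g := rfl

lemma mul_left' (hk : (k : ZMod (2 ^ m)) ^ (2 ^ n) = 1)
    (g₁ g₂ : metaG 2 m n k Nat.prime_two hk) :
    toAdd (g₁ * g₂).left
      = toAdd g₁.left + (k : ZMod (2^m))^((toAdd g₁.right).val) * toAdd g₂.left := by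
  rw [SemidirectProduct.mul_left]
  have : g₂.left = ofAdd (toAdd g₂.left) := rfl
  rw [this, phi_apply hk]
  rfl

lemma mul_right' (hk : (k : ZMod (2 ^ m)) ^ (2 ^ n) = 1)
    (g₁ g₂ : metaG 2 m n k Nat.prime_two hk) :
    toAdd (g₁ * g₂).right = toAdd g₁.right + toAdd g₂.right := rfl

lemma pow_right' (hk : (k : ZMod (2 ^ m)) ^ (2 ^ n) = 1)
    (g : metaG 2 m n k Nat.prime_two hk) (s : ℕ) :
    toAdd (g^s).right = s • toAdd g.right := by
  induction s with
  | zero => simp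
  | succ s ih =>
    rw [pow_succ, mul_right' hk, ih, succ_nsmul]

lemma nsmul_zmod_natCast (N : ℕ) [NeZero N] (s : ℕ) (y : ZMod N) :
    s • y = ((s * y.val : ℕ) : ZMod N) := by
  conv_lhs => rw [← ZMod.natCast_rightInverse y]
  rw [nsmul_eq_mul]
  push_cast
  ring

lemma pow_left' (hk : (k : ZMod (2 ^ m)) ^ (2 ^ n) = 1)
    (g : metaG 2 m n k Nat.prime_two hk) (s : ℕ) :
    toAdd (g^s).left
      = ((KC k ((toAdd g.right).val) s : ℕ) : ZMod (2^m)) * toAdd g.left := by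
  induction s with
  | zero => simp [KC_zero]
  | succ s ih =>
    rw [pow_succ, mul_left' hk, ih, pow_right' hk]
    have hv : (k : ZMod (2^m))^((s • toAdd g.right).val)
        = (k : ZMod (2^m))^(((toAdd g.right).val) * s) := by
      rw [nsmul_zmod_natCast, ZMod.val_natCast]
      exact kpow_congr hk ((Nat.mod_modEq _ _).trans (by rw [mul_comm]))
    rw [hv, KC_add, KC_one, mul_one]
    push_cast
    ring

lemma finite_metaG (hk : (k : ZMod (2 ^ m)) ^ (2 ^ n) = 1) :
    Finite (metaG 2 m n k Nat.prime_two hk) := by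
  refine Finite.of_injective
    (fun g : metaG 2 m n k Nat.prime_two hk => (g.left, g.right)) ?_
  intro a b h
  ext
  · exact congrArg Prod.fst h
  · exact congrArg Prod.snd h

end GroupFacts

section ParamSec

variable {m n k : ℕ}

/-- Parameter space for subgroups of the metacyclic group; independent of `k`. -/
structure Param (m n : ℕ) where
  I : AddSubgroup (ZMod (2^m))
  J : AddSubgroup (ZMod (2^n))
  t : ZMod (2^m) ⧸ I
  ht : (Nat.card J) • t = 0

/-- canonical generator exponent of an additive subgroup of `ZMod (2^n)` -/
noncomputable def Jγ {n : ℕ} (J : AddSubgroup (ZMod (2^n))) : ℕ := 2^n / Nat.card J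

lemma Jcard_dvd {n : ℕ} (J : AddSubgroup (ZMod (2^n))) : Nat.card J ∣ 2^n := by
  simpa using AddSubgroup.card_addSubgroup_dvd_card J

lemma Jγ_mul {n : ℕ} (J : AddSubgroup (ZMod (2^n))) : Jγ J * Nat.card J = 2^n :=
  Nat.div_mul_cancel (Jcard_dvd J)

lemma Jγ_pos {n : ℕ} (J : AddSubgroup (ZMod (2^n))) : 0 < Jγ J := by
  have := Jγ_mul J
  have h2 : 0 < (2:ℕ)^n := by positivity
  by_contra h
  simp only [Nat.not_lt, Nat.le_zero] at h
  rw [h] at this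
  omega

lemma mem_J_iff {n : ℕ} (J : AddSubgroup (ZMod (2^n))) (b : ZMod (2^n)) :
    b ∈ J ↔ Jγ J ∣ b.val :=
  zmod_mem_addSubgroup_iff (2^n) J b

/-- The key combination lemma for products. -/
lemma KC_combine (hm : 1 ≤ m) (hmn : m ≤ n) (hkodd : Odd k)
    {I : AddSubgroup (ZMod (2^m))} (t : ZMod (2^m) ⧸ I)
    {d γ : ℕ} (hγd : γ * d = 2^n) (ht : d • t = 0)
    (b₁ b₂ : ZMod (2^n)) (h₁ : γ ∣ b₁.val) (h₂ : γ ∣ b₂.val) :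
    (KC k γ (b₁.val/γ) + k^(b₁.val) * KC k γ (b₂.val/γ)) • t
      = KC k γ ((b₁+b₂).val/γ) • t := by
  have hSt : (KC k γ d) • t = 0 := (KC_smul_iff hm hmn hkodd t hγd).mpr ht
  have h2n : 0 < (2:ℕ)^n := by positivity
  have γpos : 0 < γ := by
    rcases Nat.eq_zero_or_pos γ with h | h
    · rw [h, zero_mul] at hγd; omega
    · exact h
  set s₁ := b₁.val / γ with hs₁
  set s₂ := b₂.val / γ with hs₂
  have hb₁ : γ * s₁ = b₁.val := Nat.mul_div_cancel' h₁
  have hb₂ : γ * s₂ = b₂.val := Nat.mul_div_cancel' h₂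
  have step1 : KC k γ s₁ + k^(b₁.val) * KC k γ s₂ = KC k γ (s₁ + s₂) := by
    rw [KC_add, hb₁]
  have period : ∀ r q : ℕ, KC k γ (r + d * q) • t = KC k γ r • t := by
    intro r q
    induction q with
    | zero => simp
    | succ q ih =>
      have hx : r + d*(q+1) = (r + d*q) + d := by ring
      rw [hx, KC_add, add_nsmul, ih, ← smul_smul, hSt, smul_zero, add_zero]
  have s₃eq : (b₁+b₂).val/γ = (s₁+s₂) % d := by
    rw [ZMod.val_add, ← hb₁, ← hb₂, ← mul_add, ← hγd, Nat.mul_mod_mul_left,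
      Nat.mul_div_cancel_left _ γpos]
  rw [step1, s₃eq]
  conv_lhs => rw [← Nat.mod_add_div (s₁+s₂) d]
  exact period _ _

/-- The defining set of the decoded subgroup. -/
def dSet (hk : (k : ZMod (2 ^ m)) ^ (2 ^ n) = 1) (P : Param m n) :
    Set (metaG 2 m n k Nat.prime_two hk) :=
  {g | toAdd g.right ∈ P.J ∧
    (QuotientAddGroup.mk (toAdd g.left) : ZMod (2^m) ⧸ P.I)
      = KC k (Jγ P.J) ((toAdd g.right).val / Jγ P.J) • P.t}

lemma dSet_one (hk : (k : ZMod (2 ^ m)) ^ (2 ^ n) = 1) (P : Param m n) :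
    (1 : metaG 2 m n k Nat.prime_two hk) ∈ dSet hk P := by
  constructor
  · show toAdd (1 : Multiplicative (ZMod (2^n))) ∈ P.J
    simpa using P.J.zero_mem
  · show (QuotientAddGroup.mk (toAdd (1:Multiplicative (ZMod (2^m)))) : ZMod (2^m) ⧸ P.I)
      = KC k (Jγ P.J) ((toAdd (1:Multiplicative (ZMod (2^n)))).val / Jγ P.J) • P.t
    simp [KC_zero, zero_nsmul]

lemma mk_nat_smul_quot {m : ℕ} {I : AddSubgroup (ZMod (2^m))} (c : ℕ) (x : ZMod (2^m)) :
    (QuotientAddGroup.mk (((c:ℕ) : ZMod (2^m)) * x) : ZMod (2^m) ⧸ I)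
      = c • (QuotientAddGroup.mk x : ZMod (2^m) ⧸ I) := by
  rw [← nsmul_eq_mul, QuotientAddGroup.mk_nsmul]

lemma dSet_mul (hm : 1 ≤ m) (hmn : m ≤ n) (hk : (k : ZMod (2 ^ m)) ^ (2 ^ n) = 1)
    (P : Param m n) {g₁ g₂ : metaG 2 m n k Nat.prime_two hk}
    (hg₁ : g₁ ∈ dSet hk P) (hg₂ : g₂ ∈ dSet hk P) : g₁ * g₂ ∈ dSet hk P := by
  obtain ⟨hJ₁, hq₁⟩ := hg₁
  obtain ⟨hJ₂, hq₂⟩ := hg₂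
  have hkodd : Odd k := k_odd hm hk
  constructor
  · show toAdd (g₁*g₂).right ∈ P.J
    rw [mul_right' hk]
    exact P.J.add_mem hJ₁ hJ₂
  · show (QuotientAddGroup.mk (toAdd (g₁*g₂).left) : ZMod (2^m) ⧸ P.I)
      = KC k (Jγ P.J) ((toAdd (g₁*g₂).right).val / Jγ P.J) • P.t
    rw [mul_left' hk]
    rw [QuotientAddGroup.mk_add]
    have hcast : ((k : ZMod (2^m))^((toAdd g₁.right).val)) * toAdd g₂.left
        = ((k^((toAdd g₁.right).val) : ℕ) : ZMod (2^m)) * toAdd g₂.left := by push_cast; ring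
    rw [hcast, mk_nat_smul_quot, hq₁, hq₂, smul_smul, ← add_nsmul, mul_right' hk]
    exact KC_combine hm hmn hkodd P.t (Jγ_mul P.J) P.ht _ _
      ((mem_J_iff P.J _).mp hJ₁) ((mem_J_iff P.J _).mp hJ₂)

lemma dSet_pow (hm : 1 ≤ m) (hmn : m ≤ n) (hk : (k : ZMod (2 ^ m)) ^ (2 ^ n) = 1)
    (P : Param m n) {g : metaG 2 m n k Nat.prime_two hk}
    (hg : g ∈ dSet hk P) (s : ℕ) : g^s ∈ dSet hk P := by
  induction s with
  | zero => simpa using dSet_one hk P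
  | succ s ih => rw [pow_succ]; exact dSet_mul hm hmn hk P ih hg

lemma dSet_inv (hm : 1 ≤ m) (hmn : m ≤ n) (hk : (k : ZMod (2 ^ m)) ^ (2 ^ n) = 1)
    (P : Param m n) {g : metaG 2 m n k Nat.prime_two hk}
    (hg : g ∈ dSet hk P) : g⁻¹ ∈ dSet hk P := by
  haveI := finite_metaG hk
  have ho : 0 < orderOf g := orderOf_pos g
  have hinv : g⁻¹ = g ^ (orderOf g - 1) := by
    apply inv_eq_of_mul_eq_one_right
    rw [← pow_succ']
    have : orderOf g - 1 + 1 = orderOf g := by omega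
    rw [this, pow_orderOf_eq_one]
  rw [hinv]
  exact dSet_pow hm hmn hk P hg _

/-- The subgroup of `G(2,m,n,k)` decoded from a parameter. -/
noncomputable def decode (hm : 1 ≤ m) (hmn : m ≤ n) (hk : (k : ZMod (2 ^ m)) ^ (2 ^ n) = 1)
    (P : Param m n) : Subgroup (metaG 2 m n k Nat.prime_two hk) where
  carrier := dSet hk P
  one_mem' := dSet_one hk P
  mul_mem' := fun h₁ h₂ => dSet_mul hm hmn hk P h₁ h₂
  inv_mem' := fun h => dSet_inv hm hmn hk P h

lemma mem_decode (hm : 1 ≤ m) (hmn : m ≤ n) (hk : (k : ZMod (2 ^ m)) ^ (2 ^ n) = 1)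
    (P : Param m n) (g : metaG 2 m n k Nat.prime_two hk) :
    g ∈ decode hm hmn hk P ↔ (toAdd g.right ∈ P.J ∧
    (QuotientAddGroup.mk (toAdd g.left) : ZMod (2^m) ⧸ P.I)
      = KC k (Jγ P.J) ((toAdd g.right).val / Jγ P.J) • P.t) := Iff.rfl

end ParamSec

section Encode

variable {m n k : ℕ}

lemma ext' {hk : (k : ZMod (2 ^ m)) ^ (2 ^ n) = 1}
    (g₁ g₂ : metaG 2 m n k Nat.prime_two hk)
    (hl : toAdd g₁.left = toAdd g₂.left) (hr : toAdd g₁.right = toAdd g₂.right) :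
    g₁ = g₂ := by
  ext
  · exact hl
  · exact hr

lemma nsmul_natCast (N : ℕ) [NeZero N] (s c : ℕ) :
    s • ((c : ℕ) : ZMod N) = ((s * c : ℕ) : ZMod N) := by
  rw [nsmul_eq_mul]
  push_cast
  ring

/-- The subgroup of the base determined by `H`. -/
def Asub (hk : (k : ZMod (2 ^ m)) ^ (2 ^ n) = 1)
    (H : Subgroup (metaG 2 m n k Nat.prime_two hk)) : AddSubgroup (ZMod (2^m)) where
  carrier := {x | SemidirectProduct.inl (ofAdd x) ∈ H}
  zero_mem' := by
    show SemidirectProduct.inl (ofAdd (0 : ZMod (2^m))) ∈ H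
    rw [ofAdd_zero, map_one]
    exact H.one_mem
  add_mem' := by
    intro a b ha hb
    show SemidirectProduct.inl (ofAdd (a + b)) ∈ H
    rw [ofAdd_add, map_mul]
    exact H.mul_mem ha hb
  neg_mem' := by
    intro a ha
    show SemidirectProduct.inl (ofAdd (-a)) ∈ H
    rw [ofAdd_neg, map_inv]
    exact H.inv_mem ha

/-- The image subgroup in the quotient determined by `H`. -/
def Bsub (hk : (k : ZMod (2 ^ m)) ^ (2 ^ n) = 1)
    (H : Subgroup (metaG 2 m n k Nat.prime_two hk)) : AddSubgroup (ZMod (2^n)) where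
  carrier := {y | ∃ g ∈ H, toAdd g.right = y}
  zero_mem' := ⟨1, H.one_mem, rfl⟩
  add_mem' := by
    rintro a b ⟨g₁, h₁, rfl⟩ ⟨g₂, h₂, rfl⟩
    exact ⟨g₁ * g₂, H.mul_mem h₁ h₂, mul_right' hk g₁ g₂⟩
  neg_mem' := by
    rintro a ⟨g, h, rfl⟩
    refine ⟨g⁻¹, H.inv_mem h, ?_⟩
    show toAdd (g⁻¹).right = -toAdd g.right
    have : (g⁻¹).right = g.right⁻¹ := rfl
    rw [this]
    rfl

lemma mem_Asub_iff (hk : (k : ZMod (2 ^ m)) ^ (2 ^ n) = 1)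
    (H : Subgroup (metaG 2 m n k Nat.prime_two hk)) (x : ZMod (2^m)) :
    x ∈ Asub hk H ↔ SemidirectProduct.inl (ofAdd x) ∈ H := Iff.rfl

lemma mem_Bsub_iff (hk : (k : ZMod (2 ^ m)) ^ (2 ^ n) = 1)
    (H : Subgroup (metaG 2 m n k Nat.prime_two hk)) (y : ZMod (2^n)) :
    y ∈ Bsub hk H ↔ ∃ g ∈ H, toAdd g.right = y := Iff.rfl

lemma mem_Asub_of_right_zero (hk : (k : ZMod (2 ^ m)) ^ (2 ^ n) = 1)
    {H : Subgroup (metaG 2 m n k Nat.prime_two hk)}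
    {g : metaG 2 m n k Nat.prime_two hk} (hg : g ∈ H) (hr : toAdd g.right = 0) :
    toAdd g.left ∈ Asub hk H := by
  have heq : SemidirectProduct.inl (ofAdd (toAdd g.left)) = g := by
    apply ext'
    · rfl
    · exact hr.symm
  show SemidirectProduct.inl (ofAdd (toAdd g.left)) ∈ H
  rw [heq]
  exact hg

lemma quot_eq_of_same_right (hk : (k : ZMod (2 ^ m)) ^ (2 ^ n) = 1)
    {H : Subgroup (metaG 2 m n k Nat.prime_two hk)}
    {g₁ g₂ : metaG 2 m n k Nat.prime_two hk} (h₁ : g₁ ∈ H) (h₂ : g₂ ∈ H)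
    (hr : toAdd g₁.right = toAdd g₂.right) :
    (QuotientAddGroup.mk (toAdd g₁.left) : ZMod (2^m) ⧸ Asub hk H)
      = QuotientAddGroup.mk (toAdd g₂.left) := by
  have hw : g₂⁻¹ * g₁ ∈ H := H.mul_mem (H.inv_mem h₂) h₁
  have hwr : toAdd (g₂⁻¹ * g₁).right = 0 := by
    rw [mul_right' hk]
    have : (g₂⁻¹).right = g₂.right⁻¹ := rfl
    rw [this, toAdd_inv, hr]
    abel
  have hξ : toAdd (g₂⁻¹*g₁).left ∈ Asub hk H := mem_Asub_of_right_zero hk hw hwr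
  have hdecomp : toAdd g₁.left
      = toAdd g₂.left + ((k^((toAdd g₂.right).val) : ℕ) : ZMod (2^m)) * toAdd (g₂⁻¹*g₁).left := by
    conv_lhs => rw [show g₁ = g₂ * (g₂⁻¹ * g₁) by group]
    rw [mul_left' hk]
    push_cast
    ring
  rw [hdecomp, QuotientAddGroup.mk_add, mk_nat_smul_quot]
  have : ((k^((toAdd g₂.right).val) : ℕ)) • (QuotientAddGroup.mk (toAdd (g₂⁻¹*g₁).left) :
      ZMod (2^m) ⧸ Asub hk H) = 0 := by
    rw [← QuotientAddGroup.mk_nsmul]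
    exact (QuotientAddGroup.eq_zero_iff _).mpr (AddSubgroup.nsmul_mem _ hξ _)
  rw [this, add_zero]

lemma mem_of_quot_eq (hk : (k : ZMod (2 ^ m)) ^ (2 ^ n) = 1)
    {H : Subgroup (metaG 2 m n k Nat.prime_two hk)}
    {g : metaG 2 m n k Nat.prime_two hk} (hg : g ∈ H) (x : ZMod (2^m))
    (hx : (QuotientAddGroup.mk x : ZMod (2^m) ⧸ Asub hk H)
      = QuotientAddGroup.mk (toAdd g.left)) :
    mkG hk x (toAdd g.right) ∈ H := by
  have hξ : -(toAdd g.left) + x ∈ Asub hk H := by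
    have := QuotientAddGroup.eq.mp hx.symm
    exact this
  have heq : mkG hk x (toAdd g.right) = SemidirectProduct.inl (ofAdd (-(toAdd g.left) + x)) * g := by
    apply ext'
    · rw [mul_left' hk]
      show x = toAdd (ofAdd (-(toAdd g.left) + x))
        + (k : ZMod (2^m))^((toAdd (SemidirectProduct.inl
            (ofAdd (-(toAdd g.left) + x)) : metaG 2 m n k Nat.prime_two hk).right).val)
          * toAdd g.left
      have hr0 : (toAdd (SemidirectProduct.inl (ofAdd (-(toAdd g.left) + x)) :
          metaG 2 m n k Nat.prime_two hk).right) = 0 := rfl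
      rw [hr0, toAdd_ofAdd]
      simp
    · rw [mul_right' hk]
      have hr0 : (toAdd (SemidirectProduct.inl (ofAdd (-(toAdd g.left) + x)) :
          metaG 2 m n k Nat.prime_two hk).right) = 0 := rfl
      rw [hr0, zero_add]
      rfl
  rw [heq]
  exact H.mul_mem (hξ : _ ∈ Asub hk H) hg

end Encode

section Bij

variable {m n k : ℕ}

lemma decode_surjective (hm : 1 ≤ m) (hmn : m ≤ n)
    (hk : (k : ZMod (2 ^ m)) ^ (2 ^ n) = 1) :
    Function.Surjective (decode (k := k) hm hmn hk) := by
  intro H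
  have hkodd : Odd k := k_odd hm hk
  set I := Asub hk H with hI
  set J := Bsub hk H with hJ
  set γ := Jγ J with hγ
  set d := Nat.card J with hd
  have hγd : γ * d = 2^n := Jγ_mul J
  have hγ2 : γ ∣ 2^n := ⟨d, hγd.symm⟩
  have hγJ : ((γ:ℕ) : ZMod (2^n)) ∈ J := (mem_J_iff J _).mpr (by
    rw [ZMod.val_natCast]
    exact (Nat.dvd_mod_iff hγ2).mpr dvd_rfl)
  obtain ⟨g₀, hg₀H, hg₀r⟩ := hγJ
  set t : ZMod (2^m) ⧸ I := QuotientAddGroup.mk (toAdd g₀.left) with ht'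
  have key : ∀ s : ℕ, toAdd (g₀^s).right = ((γ * s : ℕ) : ZMod (2^n))
      ∧ (QuotientAddGroup.mk (toAdd (g₀^s).left) : ZMod (2^m) ⧸ I) = KC k γ s • t := by
    intro s
    constructor
    · rw [pow_right' hk, hg₀r, nsmul_natCast, mul_comm]
    · rw [pow_left' hk, mk_nat_smul_quot, ← ht']
      have hval : (toAdd g₀.right).val ≡ γ [MOD 2^n] := by
        rw [hg₀r, ZMod.val_natCast]
        exact (Nat.mod_modEq _ _)
      exact qsmul_congr (KC_congr hk s hval) t
  have htd : d • t = 0 := by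
    apply (KC_smul_iff hm hmn hkodd t hγd).mp
    rw [← (key d).2]
    apply (QuotientAddGroup.eq_zero_iff _).mpr
    apply mem_Asub_of_right_zero hk (H.pow_mem hg₀H d)
    rw [(key d).1, hγd, ZMod.natCast_self]
  refine ⟨⟨I, J, t, htd⟩, ?_⟩
  ext g
  rw [mem_decode]
  show (toAdd g.right ∈ J ∧
    (QuotientAddGroup.mk (toAdd g.left) : ZMod (2^m) ⧸ I)
      = KC k γ ((toAdd g.right).val / γ) • t) ↔ g ∈ H
  constructor
  · rintro ⟨hbJ, hq⟩
    set s := (toAdd g.right).val / γ with hs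
    have hdvd : γ ∣ (toAdd g.right).val := (mem_J_iff J _).mp hbJ
    have hsr : toAdd (g₀^s).right = toAdd g.right := by
      rw [(key s).1, Nat.mul_div_cancel' hdvd]
      exact ZMod.natCast_rightInverse _
    have hx : (QuotientAddGroup.mk (toAdd g.left) : ZMod (2^m) ⧸ I)
        = QuotientAddGroup.mk (toAdd (g₀^s).left) := by
      rw [hq, (key s).2]
    have hmem := mem_of_quot_eq hk (H.pow_mem hg₀H s) (toAdd g.left) (by
      show (QuotientAddGroup.mk (toAdd g.left) : ZMod (2^m) ⧸ Asub hk H)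
        = QuotientAddGroup.mk (toAdd (g₀^s).left)
      rw [← hI]
      exact hx)
    rw [hsr] at hmem
    have := mkG_eta hk g
    rw [this] at hmem
    exact hmem
  · intro hgH
    have hbJ : toAdd g.right ∈ J := ⟨g, hgH, rfl⟩
    refine ⟨hbJ, ?_⟩
    set s := (toAdd g.right).val / γ with hs
    have hdvd : γ ∣ (toAdd g.right).val := (mem_J_iff J _).mp hbJ
    have hsr : toAdd (g₀^s).right = toAdd g.right := by
      rw [(key s).1, Nat.mul_div_cancel' hdvd]
      exact ZMod.natCast_rightInverse _
    have heq := quot_eq_of_same_right hk hgH (H.pow_mem hg₀H s) hsr.symm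
    rw [← hI] at heq
    rw [heq, (key s).2]

lemma decode_injective (hm : 1 ≤ m) (hmn : m ≤ n)
    (hk : (k : ZMod (2 ^ m)) ^ (2 ^ n) = 1) :
    Function.Injective (decode (k := k) hm hmn hk) := by
  rintro ⟨I, J, t, ht⟩ ⟨I', J', t', ht'⟩ h
  have hmem : ∀ g, g ∈ decode hm hmn hk ⟨I, J, t, ht⟩ ↔ g ∈ decode hm hmn hk ⟨I', J', t', ht'⟩ := by
    rw [h]
    intro g
    rfl
  -- I = I'
  have hI : I = I' := by
    ext a
    have h1 := hmem (mkG hk a 0)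
    rw [mem_decode, mem_decode] at h1
    have hz : (toAdd (mkG hk a 0).right) = (0 : ZMod (2^n)) := rfl
    have hval0 : ((0 : ZMod (2^n)).val) = 0 := ZMod.val_zero
    simp only [hz, hval0, Nat.zero_div, KC_zero, zero_nsmul] at h1
    have hq : ∀ (K : AddSubgroup (ZMod (2^m))),
        ((QuotientAddGroup.mk (toAdd (mkG hk a 0).left) : ZMod (2^m) ⧸ K) = 0 ↔ a ∈ K) := by
      intro K
      exact QuotientAddGroup.eq_zero_iff a
    constructor
    · intro haI
      exact (hq I').mp (h1.mp ⟨J.zero_mem, (hq I).mpr haI⟩).2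
    · intro haI'
      exact (hq I).mp (h1.mpr ⟨J'.zero_mem, (hq I').mpr haI'⟩).2
  subst hI
  -- J = J'
  have hJ : J = J' := by
    ext b
    constructor
    · intro hb
      have h1 := hmem (mkG hk (KC k (Jγ J) (b.val / Jγ J) • t).out b)
      rw [mem_decode, mem_decode] at h1
      have := h1.mp ⟨hb, by
        show QuotientAddGroup.mk (Quotient.out _) = _
        rw [QuotientAddGroup.out_eq']
        rfl⟩
      exact this.1
    · intro hb
      have h1 := hmem (mkG hk (KC k (Jγ J') (b.val / Jγ J') • t').out b)
      rw [mem_decode, mem_decode] at h1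
      have := h1.mpr ⟨hb, by
        show QuotientAddGroup.mk (Quotient.out _) = _
        rw [QuotientAddGroup.out_eq']
        rfl⟩
      exact this.1
  subst hJ
  -- t = t'
  have ht'' : t = t' := by
    rcases eq_or_ne (Nat.card J) 1 with hd1 | hd1
    · rw [hd1, one_nsmul] at ht ht'
      rw [ht, ht']
    · have hγd : Jγ J * Nat.card J = 2^n := Jγ_mul J
      have hdpos : 0 < Nat.card J := Nat.pos_of_ne_zero (by
        intro h0
        rw [h0, mul_zero] at hγd
        have : (0:ℕ) < 2^n := by positivity
        omega)
      have hγlt : Jγ J < 2^n := by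
        have h2 : 2 ≤ Nat.card J := by omega
        have := Jγ_pos J
        nlinarith [hγd]
      have hval : ((Jγ J : ℕ) : ZMod (2^n)).val = Jγ J := ZMod.val_natCast_of_lt hγlt
      have hbJ : ((Jγ J : ℕ) : ZMod (2^n)) ∈ J := (mem_J_iff J _).mpr (by rw [hval])
      have hsone : (((Jγ J : ℕ) : ZMod (2^n)).val) / Jγ J = 1 := by
        rw [hval]
        exact Nat.div_self (Jγ_pos J)
      have h1 := hmem (mkG hk (KC k (Jγ J) 1 • t).out ((Jγ J : ℕ) : ZMod (2^n)))
      rw [mem_decode, mem_decode] at h1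
      have h2 := h1.mp ⟨hbJ, by
        simp only [mkG_right, mkG_left, toAdd_ofAdd]
        rw [hsone, QuotientAddGroup.out_eq', KC_one]⟩
      have h3 := h2.2
      simp only [mkG_right, mkG_left, toAdd_ofAdd] at h3
      rw [hsone] at h3
      have h4 : (QuotientAddGroup.mk (KC k (Jγ J) 1 • t).out : ZMod (2^m) ⧸ I)
          = KC k (Jγ J) 1 • t := QuotientAddGroup.out_eq' _
      rw [h4, KC_one, one_nsmul, one_nsmul] at h3
      exact h3
  subst ht''
  rfl

lemma card_decode (hm : 1 ≤ m) (hmn : m ≤ n)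
    (hk : (k : ZMod (2 ^ m)) ^ (2 ^ n) = 1) (P : Param m n) :
    Nat.card (decode (k := k) hm hmn hk P) = Nat.card P.I * Nat.card P.J := by
  rw [← Nat.card_prod]
  apply Nat.card_congr
  have rmem : ∀ b : ZMod (2^n), b ∈ P.J → ∀ x : ZMod (2^m),
      (QuotientAddGroup.mk x : ZMod (2^m) ⧸ P.I)
        = KC k (Jγ P.J) (b.val / Jγ P.J) • P.t → mkG hk x b ∈ decode hm hmn hk P := by
    intro b hb x hx
    rw [mem_decode]
    exact ⟨hb, hx⟩
  refine
    { toFun := fun g =>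
        (⟨toAdd g.1.left
            - (KC k (Jγ P.J) (((toAdd g.1.right)).val / Jγ P.J) • P.t).out, ?_⟩,
         ⟨toAdd g.1.right, ?_⟩)
      invFun := fun z =>
        ⟨mkG hk (z.1.1 + (KC k (Jγ P.J) ((z.2.1).val / Jγ P.J) • P.t).out) z.2.1, ?_⟩
      left_inv := ?_
      right_inv := ?_ }
  · -- membership in P.I
    obtain ⟨hbJ, hq⟩ := (mem_decode hm hmn hk P _).mp g.2
    rw [← QuotientAddGroup.eq_zero_iff, QuotientAddGroup.mk_sub, hq, QuotientAddGroup.out_eq',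
      sub_self]
  · exact ((mem_decode hm hmn hk P _).mp g.2).1
  · -- membership of invFun in decode
    apply rmem _ z.2.2
    rw [QuotientAddGroup.mk_add, QuotientAddGroup.out_eq']
    have : (QuotientAddGroup.mk z.1.1 : ZMod (2^m) ⧸ P.I) = 0 :=
      (QuotientAddGroup.eq_zero_iff _).mpr z.1.2
    rw [this, zero_add]
  · intro g
    apply Subtype.ext
    apply ext'
    · show (toAdd g.1.left - _) + _ = toAdd g.1.left
      exact sub_add_cancel _ _
    · rfl
  · intro z
    ext
    · show (toAdd (mkG hk (z.1.1 + _) z.2.1).left) - _ = z.1.1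
      show (z.1.1 + (KC k (Jγ P.J) ((z.2.1).val / Jγ P.J) • P.t).out)
        - (KC k (Jγ P.J) (((toAdd (mkG hk _ z.2.1).right)).val / Jγ P.J) • P.t).out = z.1.1
      have : toAdd (mkG hk (z.1.1 + (KC k (Jγ P.J) ((z.2.1).val / Jγ P.J) • P.t).out) z.2.1).right
          = z.2.1 := rfl
      rw [this, add_sub_cancel_right]
    · rfl

end Bij

lemma subCount_eq_param {m n k : ℕ} (hm : 1 ≤ m) (hmn : m ≤ n)
    (hk : (k : ZMod (2 ^ m)) ^ (2 ^ n) = 1) (N : ℕ) :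
    subCount (metaG 2 m n k Nat.prime_two hk) N
      = Nat.card {P : Param m n // Nat.card P.I * Nat.card P.J = N} := by
  unfold subCount
  apply Nat.card_congr
  have bij : Function.Bijective (decode (k := k) hm hmn hk) :=
    ⟨decode_injective hm hmn hk, decode_surjective hm hmn hk⟩
  let e : Param m n ≃ Subgroup (metaG 2 m n k Nat.prime_two hk) := Equiv.ofBijective _ bij
  refine Equiv.subtypeEquiv e.symm ?_
  intro H
  have h1 : Nat.card H = Nat.card (e (e.symm H)) := by rw [e.apply_symm_apply]
  have h2 : e (e.symm H) = decode hm hmn hk (e.symm H) := rfl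
  rw [h1, h2, card_decode]

/-- For `p = 2` and `n ≥ m`, all valid `G(2,m,n,k)` have the same group
zeta function. -/
theorem metaG_two_zeta_eq_of_le (m n k₁ k₂ : ℕ) (hm : 1 ≤ m) (hn : 1 ≤ n) (hmn : m ≤ n)
    (h₁ : (k₁ : ZMod (2 ^ m)) ^ (2 ^ n) = 1) (h₂ : (k₂ : ZMod (2 ^ m)) ^ (2 ^ n) = 1) :
    ∀ N : ℕ, 1 ≤ N →
      subCount (metaG 2 m n k₁ Nat.prime_two h₁) N
        = subCount (metaG 2 m n k₂ Nat.prime_two h₂) N := by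
  intro N _
  rw [subCount_eq_param hm hmn h₁ N, subCount_eq_param hm hmn h₂ N]
end

section
/- Let p be an odd prime, r, j ≥ 0 integers, and u a natural number with u ≡ 1 (mod p). Set S := Σ_{ν = 0}^{p^j − 1} u^ν. Then the cardinality of {x : ZMod (p^r) | (S : ZMod (p^r)) * x = 0} equals p^{min(r, j)}. -/
open Finset

lemma modeq_sum {n : ℕ} {ι : Type*} (s : Finset ι) (f g : ι → ℕ)
    (h : ∀ i ∈ s, f i ≡ g i [MOD n]) : (∑ i ∈ s, f i) ≡ ∑ i ∈ s, g i [MOD n] := by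
  classical
  induction s using Finset.induction_on with
  | empty => simp; rfl
  | insert _ _ hx ih =>
      rw [Finset.sum_insert hx, Finset.sum_insert hx]
      exact (h _ (Finset.mem_insert_self _ _)).add
        (ih fun i hi => h i (Finset.mem_insert_of_mem hi))

lemma geom_sum_range_mul (u m n : ℕ) :
    ∑ ν ∈ range (m * n), u ^ ν
      = (∑ ρ ∈ range m, u ^ ρ) * (∑ i ∈ range n, (u ^ m) ^ i) := by
  induction n with
  | zero => simp
  | succ n ih =>
      rw [Nat.mul_succ, Finset.sum_range_add, ih, Finset.sum_range_succ, Nat.mul_add]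
      congr 1
      rw [← pow_mul, Finset.sum_mul]
      exact Finset.sum_congr rfl fun ρ _ => by rw [← pow_add, Nat.add_comm]

lemma geom_sum_p_cong (p w : ℕ) (hp : p.Prime) (hodd : p ≠ 2) (hw : w ≡ 1 [MOD p]) :
    (∑ i ∈ range p, w ^ i) ≡ p [MOD p ^ 2] := by
  have hp1 := hp.two_le
  have h1 : 1 ≤ w := by
    rcases Nat.eq_zero_or_pos w with h | h
    · exfalso
      have h0 : 0 % p = 1 % p := h ▸ hw
      rw [Nat.zero_mod, Nat.mod_eq_of_lt (by omega)] at h0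
      omega
    · exact h
  obtain ⟨t, ht⟩ := (Nat.modEq_iff_dvd' h1).mp hw.symm
  have hw' : w = 1 + p * t := by omega
  have key : ∀ i, w ^ i ≡ 1 + i * (p * t) [MOD p ^ 2] := by
    intro i
    induction i with
    | zero => simpa using Nat.ModEq.refl 1
    | succ i ih =>
        calc w ^ (i + 1) = w ^ i * w := pow_succ w i
          _ ≡ (1 + i * (p * t)) * (1 + p * t) [MOD p ^ 2] := ih.mul (by rw [hw'])
          _ ≡ 1 + (i + 1) * (p * t) [MOD p ^ 2] := by
              have he : (1 + i * (p * t)) * (1 + p * t)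
                  = 1 + (i + 1) * (p * t) + p ^ 2 * (i * t * t) := by ring
              rw [he]
              exact ((Nat.modEq_iff_dvd' (by omega)).mpr ⟨i * t * t, by omega⟩).symm
  calc (∑ i ∈ range p, w ^ i) ≡ (∑ i ∈ range p, (1 + i * (p * t))) [MOD p ^ 2] :=
        modeq_sum _ _ _ (fun i _ => key i)
    _ = p + (∑ i ∈ range p, i) * (p * t) := by
        rw [Finset.sum_add_distrib, ← Finset.sum_mul]; simp
    _ ≡ p [MOD p ^ 2] := by
        have hps : ∑ i ∈ range p, i = p * (p - 1) / 2 := by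
          rw [Finset.sum_range_id]
        have h2 : 2 ∣ p - 1 := by
          obtain ⟨s, hs⟩ := hp.odd_of_ne_two hodd; omega
        obtain ⟨s, hs⟩ := h2
        have he : (∑ i ∈ range p, i) * (p * t) = p ^ 2 * (s * t) := by
          rw [hps, hs, Nat.mul_div_assoc p ⟨s, rfl⟩,
            Nat.mul_div_cancel_left s (by norm_num)]
          ring
        rw [he]
        exact ((Nat.modEq_iff_dvd' (by omega)).mpr ⟨s * t, by omega⟩).symm

lemma geom_sum_val (p u : ℕ) (hp : p.Prime) (hodd : p ≠ 2) (hu : u ≡ 1 [MOD p]) (j : ℕ) :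
    (∑ ν ∈ range (p ^ j), u ^ ν) ≡ p ^ j [MOD p ^ (j + 1)] := by
  induction j with
  | zero => simpa using Nat.ModEq.refl 1
  | succ j ih =>
      have hupj : u ^ p ^ j ≡ 1 [MOD p] := by simpa using hu.pow (p ^ j)
      have hT := geom_sum_p_cong p (u ^ p ^ j) hp hodd hupj
      set S := ∑ ρ ∈ range (p ^ j), u ^ ρ with hS
      set T := ∑ i ∈ range p, (u ^ p ^ j) ^ i with hTd
      have hsplit : ∑ ν ∈ range (p ^ (j + 1)), u ^ ν = S * T := by
        rw [show p ^ (j + 1) = p ^ j * p from pow_succ p j, geom_sum_range_mul]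
      rw [hsplit]
      obtain ⟨A, hA⟩ := (Nat.modEq_iff_dvd).mp ih
      obtain ⟨B, hB⟩ := (Nat.modEq_iff_dvd).mp hT
      rw [Nat.modEq_iff_dvd]
      push_cast at hA hB ⊢
      have hSe : (S : ℤ) = (p : ℤ) ^ j - (p : ℤ) ^ (j + 1) * A := by linarith
      have hTe : (T : ℤ) = (p : ℤ) - (p : ℤ) ^ 2 * B := by linarith
      refine ⟨A + B - (p : ℤ) * A * B, ?_⟩
      rw [hSe, hTe]; ring

lemma card_dvd_val (p : ℕ) (hp : p.Prime) (r k : ℕ) (hk : k ≤ r) :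
    Nat.card {x : ZMod (p ^ r) | (p ^ (r - k) : ℕ) ∣ x.val} = p ^ k := by
  have hp0 : 0 < p := hp.pos
  haveI : NeZero (p ^ r) := ⟨by positivity⟩
  set d := p ^ (r - k) with hd
  have hdk : d * p ^ k = p ^ r := by
    rw [hd, ← pow_add, Nat.sub_add_cancel hk]
  have hd0 : 0 < d := by positivity
  have e : {x : ZMod (p ^ r) | d ∣ x.val} ≃ Fin (p ^ k) := by
    refine ⟨fun x => ⟨x.1.val / d, ?_⟩, fun i => ⟨((i.1 * d : ℕ) : ZMod (p ^ r)), ?_⟩, ?_, ?_⟩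
    · exact Nat.div_lt_of_lt_mul (by rw [hdk]; exact ZMod.val_lt x.1)
    · have hlt : i.1 * d < p ^ r := by
        rw [← hdk, mul_comm d]
        exact (Nat.mul_lt_mul_right hd0).mpr i.2
      show d ∣ _
      rw [ZMod.val_cast_of_lt hlt]
      exact dvd_mul_left d i.1
    · rintro ⟨x, hx⟩
      apply Subtype.ext
      dsimp only
      rw [Nat.div_mul_cancel hx, ZMod.natCast_val, ZMod.cast_id]
    · rintro ⟨i, hi⟩
      have hlt : i * d < p ^ r := by
        rw [← hdk, mul_comm d]
        exact (Nat.mul_lt_mul_right hd0).mpr hi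
      apply Fin.ext
      dsimp only
      rw [ZMod.val_cast_of_lt hlt]
      exact Nat.mul_div_left i hd0
  rw [Nat.card_congr e, Nat.card_eq_fintype_card, Fintype.card_fin]

/-- For `p` an odd prime and `u ≡ 1 (mod p)`, the kernel of multiplication by
`S = Σ_{ν < p^j} u^ν` on `ZMod (p^r)` has cardinality `p^{min(r,j)}`. -/
theorem card_ker_norm_odd (p : ℕ) (hp : p.Prime) (hodd : p ≠ 2) (r j u : ℕ)
    (hu : u ≡ 1 [MOD p]) :
    Nat.card {x : ZMod (p ^ r) |
        ((∑ ν ∈ Finset.range (p ^ j), u ^ ν : ℕ) : ZMod (p ^ r)) * x = 0}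
      = p ^ min r j := by
  have hp0 : 0 < p := hp.pos
  have hp1 := hp.two_le
  haveI : NeZero (p ^ r) := ⟨by positivity⟩
  set S := ∑ ν ∈ range (p ^ j), u ^ ν with hS
  have hu1 : 1 ≤ u := by
    rcases Nat.eq_zero_or_pos u with h | h
    · exfalso
      have h0 : 0 % p = 1 % p := h ▸ hu
      rw [Nat.zero_mod, Nat.mod_eq_of_lt (by omega)] at h0
      omega
    · exact h
  have hple : p ^ j ≤ S := by
    calc p ^ j = ∑ ν ∈ range (p ^ j), 1 := by simp
      _ ≤ S := Finset.sum_le_sum fun ν _ => Nat.one_le_pow _ _ (by omega)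
  obtain ⟨m, hm⟩ := (Nat.modEq_iff_dvd' hple).mp (geom_sum_val p u hp hodd hu j).symm
  set c := 1 + p * m with hc
  have hSc : S = p ^ j * c := by
    have h2 : p ^ j * c = p ^ j + p ^ (j + 1) * m := by rw [hc]; ring
    omega
  have hpc : ¬ p ∣ c := by
    intro h
    rw [hc] at h
    have h1 : p ∣ 1 := (Nat.dvd_add_right (dvd_mul_right p m)).mp (by rwa [Nat.add_comm] at h)
    rw [Nat.dvd_one] at h1
    omega
  have hchar : ∀ x : ZMod (p ^ r),
      ((S : ℕ) : ZMod (p ^ r)) * x = 0 ↔ (p ^ (r - min r j) : ℕ) ∣ x.val := by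
    intro x
    have h1 : ((S : ℕ) : ZMod (p ^ r)) * x = ((S * x.val : ℕ) : ZMod (p ^ r)) := by
      push_cast
      rw [ZMod.natCast_val, ZMod.cast_id]
    rw [h1, ZMod.natCast_eq_zero_iff]
    constructor
    · intro h
      rcases le_total r j with hrj | hjr
      · rw [min_eq_left hrj, Nat.sub_self, pow_zero]
        exact one_dvd _
      · rw [min_eq_right hjr]
        have h2 : p ^ r ∣ p ^ j * x.val := by
          have hcop : Nat.Coprime (p ^ r) c :=
            ((Nat.Prime.coprime_iff_not_dvd hp).mpr hpc).pow_left r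
          refine hcop.dvd_of_dvd_mul_right ?_
          rw [hSc] at h
          have he : p ^ j * c * x.val = p ^ j * x.val * c := by ring
          rwa [he] at h
        have he : p ^ r = p ^ j * p ^ (r - j) := by
          rw [← pow_add, Nat.add_sub_cancel' hjr]
        have h3 : p ^ j * p ^ (r - j) ∣ p ^ j * x.val := (dvd_of_eq he.symm).trans h2
        exact (Nat.mul_dvd_mul_iff_left (show 0 < p ^ j by positivity)).mp h3
    · intro h
      have h2 : p ^ r ∣ p ^ j * x.val := by
        have he : p ^ r = p ^ (min r j) * p ^ (r - min r j) := by
          rw [← pow_add, Nat.add_sub_cancel' (min_le_left r j)]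
        exact (dvd_of_eq he).trans
          (Nat.mul_dvd_mul (pow_dvd_pow p (min_le_right r j)) h)
      calc p ^ r ∣ p ^ j * x.val := h2
        _ ∣ S * x.val := by rw [hSc]; exact mul_dvd_mul_right (dvd_mul_right _ _) x.val
  have hset : {x : ZMod (p ^ r) | ((S : ℕ) : ZMod (p ^ r)) * x = 0}
      = {x : ZMod (p ^ r) | (p ^ (r - min r j) : ℕ) ∣ x.val} := by
    ext x; exact hchar x
  rw [hset]
  exact card_dvd_val p hp r (min r j) (min_le_left r j)
end

section
/- Let r, j ≥ 0 be integers and u an odd natural number, and set S := Σ_{ν = 0}^{2^j − 1} u^ν. If u ≡ 1 (mod 2^r), then the cardinality of {x : ZMod (2^r) | (S : ZMod (2^r)) * x = 0} equals 2^{min(r, j)}. If u ≢ 1 (mod 2^r) and j ≥ 1, then this cardinality equals 2^{min(r, v₂(u+1) + j − 1)}, where v₂ denotes the 2-adic valuation (padicValNat 2). -/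
open Finset

/-- Kernel of multiplication by `a` on `ZMod n` has cardinality `gcd a n`. -/
lemma card_ker_gcd (n a : ℕ) (hn : n ≠ 0) :
    Nat.card {x : ZMod n | (a : ZMod n) * x = 0} = Nat.gcd n a := by
  haveI : NeZero n := ⟨hn⟩
  let f : ZMod n →+ ZMod n := AddMonoidHom.mulLeft (a : ZMod n)
  have hker : {x : ZMod n | (a : ZMod n) * x = 0} = (f.ker : Set (ZMod n)) := rfl
  have hrange : f.range = AddSubgroup.zmultiples (a : ZMod n) := by
    ext y
    constructor
    · rintro ⟨x, rfl⟩
      refine ⟨(x.val : ℤ), ?_⟩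
      show (x.val : ℤ) • (a : ZMod n) = (a : ZMod n) * x
      rw [natCast_zsmul, nsmul_eq_mul, mul_comm, ZMod.natCast_val, ZMod.cast_id]
    · rintro ⟨k, rfl⟩
      exact ⟨(k : ZMod n), by simp [f, mul_comm, zsmul_eq_mul]⟩
  have h1 : Nat.card (ZMod n) = Nat.card (ZMod n ⧸ f.ker) * Nat.card f.ker :=
    AddSubgroup.card_eq_card_quotient_mul_card_addSubgroup f.ker
  have h2 : Nat.card (ZMod n ⧸ f.ker) = Nat.card f.range :=
    Nat.card_congr (QuotientAddGroup.quotientKerEquivRange f).toEquiv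
  have h3 : Nat.card f.range = n / Nat.gcd n a := by
    rw [hrange, Nat.card_zmultiples, ZMod.addOrderOf_coe a hn]
  have hcard : Nat.card (ZMod n) = n := Nat.card_zmod n
  rw [hker]
  rw [hcard, h2, h3] at h1
  have hg : Nat.gcd n a ∣ n := Nat.gcd_dvd_left n a
  have hgpos : 0 < Nat.gcd n a := Nat.gcd_pos_of_pos_left a (Nat.pos_of_ne_zero hn)
  have hdivpos : 0 < n / Nat.gcd n a := Nat.div_pos (Nat.le_of_dvd (Nat.pos_of_ne_zero hn) hg) hgpos
  have hk : Nat.card f.ker = n / (n / Nat.gcd n a) :=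
    Nat.eq_div_of_mul_eq_right hdivpos.ne' h1.symm
  have : Nat.card f.ker = Nat.gcd n a := by rw [hk, Nat.div_div_self hg hn]
  exact this

lemma sum_pos_of_odd (u m : ℕ) (hm : 0 < m) (hu : Odd u) :
    0 < ∑ ν ∈ Finset.range m, u ^ ν := by
  have : 0 < u := hu.pos
  calc 0 < u ^ 0 := by positivity
  _ ≤ ∑ ν ∈ Finset.range m, u ^ ν :=
    Finset.single_le_sum (f := fun ν => u ^ ν) (fun i _ => by positivity) (by simpa using hm)

lemma v2_one_add_sq (w : ℕ) (hw : Odd w) : padicValNat 2 (1 + w ^ 2) = 1 := by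
  obtain ⟨k, rfl⟩ := hw
  have h : 1 + (2 * k + 1) ^ 2 = 2 * (2 * (k ^ 2 + k) + 1) := by ring
  rw [h, padicValNat.mul (by norm_num) (by positivity), padicValNat.self (by norm_num),
    padicValNat.eq_zero_of_not_dvd (by omega)]

lemma sum_split (u j : ℕ) :
    ∑ ν ∈ Finset.range (2 ^ (j + 1)), u ^ ν
      = (∑ ν ∈ Finset.range (2 ^ j), u ^ ν) * (1 + u ^ (2 ^ j)) := by
  have h : 2 ^ (j + 1) = 2 ^ j + 2 ^ j := by ring
  rw [h, Finset.sum_range_add]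
  simp only [pow_add]
  rw [← Finset.mul_sum, mul_add, mul_one, mul_comm (u ^ 2 ^ j)]

lemma v2_S (u j : ℕ) (hu : Odd u) (hj : 1 ≤ j) :
    padicValNat 2 (∑ ν ∈ Finset.range (2 ^ j), u ^ ν)
      = padicValNat 2 (u + 1) + (j - 1) := by
  induction j with
  | zero => omega
  | succ n ih =>
    rcases Nat.eq_or_lt_of_le hj with h1 | h2
    · -- n + 1 = 1, i.e. n = 0
      have hn : n = 0 := by omega
      subst hn
      norm_num [Finset.sum_range_succ, Nat.add_comm 1 u]
    · have hn : 1 ≤ n := by omega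
      rw [sum_split, padicValNat.mul (sum_pos_of_odd u _ (by positivity) hu).ne'
        (by have := hu.pos; positivity), ih hn]
      have hodd : Odd (u ^ 2 ^ (n - 1)) := hu.pow
      have : u ^ 2 ^ n = (u ^ 2 ^ (n - 1)) ^ 2 := by
        rw [← pow_mul]
        congr 1
        rw [← pow_succ]
        congr 1
        omega
      rw [this, v2_one_add_sq _ hodd]
      omega

lemma gcd_two_pow (r a : ℕ) (ha : a ≠ 0) :
    Nat.gcd (2 ^ r) a = 2 ^ min r (padicValNat 2 a) := by
  set v := padicValNat 2 a with hv
  obtain ⟨m, hm⟩ : 2 ^ v ∣ a := pow_padicValNat_dvd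
  have hmodd : ¬ 2 ∣ m := by
    intro ⟨c, hc⟩
    have : 2 ^ (v + 1) ∣ a := ⟨c, by rw [hm, hc]; ring⟩
    exact pow_succ_padicValNat_not_dvd ha this
  have hmo : m % 2 = 1 := by omega
  have hmcop : Nat.Coprime (2 ^ r) m :=
    Nat.Coprime.pow_left r (Nat.coprime_two_left.mpr (Nat.odd_iff.mpr hmo))
  rw [hm, Nat.Coprime.gcd_mul_right_cancel_right _ hmcop.symm]
  rcases le_total r v with h | h
  · rw [min_eq_left h, Nat.gcd_eq_left (pow_dvd_pow 2 h)]
  · rw [min_eq_right h, Nat.gcd_eq_right (pow_dvd_pow 2 h)]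

/-- For `u` odd and `S = Σ_{ν < 2^j} u^ν`: if `u ≡ 1 (mod 2^r)` the kernel of
multiplication by `S` on `ZMod (2^r)` has cardinality `2^{min(r,j)}`; if `u ≢ 1 (mod 2^r)` and
`j ≥ 1` it has cardinality `2^{min(r, v₂(u+1)+j−1)}`. -/
theorem card_ker_norm_two (r j u : ℕ) (hu : Odd u) :
    (u ≡ 1 [MOD 2 ^ r] →
        Nat.card {x : ZMod (2 ^ r) |
            ((∑ ν ∈ Finset.range (2 ^ j), u ^ ν : ℕ) : ZMod (2 ^ r)) * x = 0}
          = 2 ^ min r j) ∧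
      (¬ u ≡ 1 [MOD 2 ^ r] → 1 ≤ j →
        Nat.card {x : ZMod (2 ^ r) |
            ((∑ ν ∈ Finset.range (2 ^ j), u ^ ν : ℕ) : ZMod (2 ^ r)) * x = 0}
          = 2 ^ min r (padicValNat 2 (u + 1) + j - 1)) := by
  have hn : (2 : ℕ) ^ r ≠ 0 := by positivity
  have hSpos := sum_pos_of_odd u (2 ^ j) (by positivity) hu
  constructor
  · intro h1
    rw [card_ker_gcd _ _ hn]
    have hu1 : ((u : ZMod (2 ^ r))) = 1 := by
      have := (ZMod.natCast_eq_natCast_iff u 1 (2 ^ r)).mpr h1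
      simpa using this
    have hmod : (∑ ν ∈ Finset.range (2 ^ j), u ^ ν) ≡ 2 ^ j [MOD 2 ^ r] := by
      rw [← ZMod.natCast_eq_natCast_iff]
      push_cast
      simp [hu1]
    have hg : Nat.gcd (2 ^ r) (∑ ν ∈ Finset.range (2 ^ j), u ^ ν)
        = Nat.gcd (2 ^ r) (2 ^ j) := by
      rw [Nat.gcd_rec (2 ^ r) _,
        show (∑ ν ∈ Finset.range (2 ^ j), u ^ ν) % 2 ^ r = 2 ^ j % 2 ^ r from hmod,
        ← Nat.gcd_rec]
    rw [hg]
    rcases le_total r j with h | h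
    · rw [min_eq_left h, Nat.gcd_eq_left (pow_dvd_pow 2 h)]
    · rw [min_eq_right h, Nat.gcd_eq_right (pow_dvd_pow 2 h)]
  · intro _ hj
    rw [card_ker_gcd _ _ hn, gcd_two_pow _ _ hSpos.ne', v2_S u j hu hj]
    congr 1
    omega
end

section
/- Let p be a prime and let G₁ and G₂ be finite p-groups with Nat.card G₁ = Nat.card G₂. If the subgroup lattices of G₁ and G₂ are isomorphic as lattices (i.e. there exists an order isomorphism Subgroup G₁ ≃o Subgroup G₂), then for every natural number N ≥ 1 the number of subgroups of G₁ of order N equals the number of subgroups of G₂ of order N; that is, ζ_{G₁}(s) = ζ_{G₂}(s). -/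
open Order

/-- In a finite `p`-group, the map `H ↦ v_p(|H|)` is strictly monotone on subgroups. -/
private lemma exponent_strictMono {p : ℕ} (hp : p.Prime) {G : Type*} [Group G] [Finite G]
    (hG : IsPGroup p G) :
    StrictMono (fun H : Subgroup G => (Nat.card H).factorization p) := by
  have : Fact p.Prime := ⟨hp⟩
  intro K L hKL
  obtain ⟨a, ha⟩ := IsPGroup.iff_card.mp (hG.to_subgroup K)
  obtain ⟨b, hb⟩ := IsPGroup.iff_card.mp (hG.to_subgroup L)
  have hdvd : Nat.card K ∣ Nat.card L := Subgroup.card_dvd_of_le hKL.le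
  have hab : a ≤ b := by
    rw [ha, hb] at hdvd
    exact (Nat.pow_dvd_pow_iff_le_right hp.one_lt).mp hdvd
  have hne : a ≠ b := by
    intro h
    subst h
    exact hKL.ne (Subgroup.eq_of_le_of_card_ge hKL.le (by rw [ha, hb]))
  simp only [ha, hb, Nat.Prime.factorization_pow hp, Finsupp.single_eq_same]
  exact lt_of_le_of_ne hab hne

/-- Lower bound: a subgroup of order `p ^ n` has height at least `n`. -/
private lemma le_height_of_card_eq {p : ℕ} (hp : p.Prime) {G : Type*} [Group G] [Finite G]
    (hG : IsPGroup p G) : ∀ (n : ℕ) (H : Subgroup G), Nat.card H = p ^ n →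
      (n : ℕ∞) ≤ Order.height H := by
  have : Fact p.Prime := ⟨hp⟩
  intro n
  induction n with
  | zero => intro H _; simp
  | succ n ih =>
    intro H hH
    have hdvd : p ^ n ∣ Nat.card H := by
      rw [hH]; exact pow_dvd_pow p (Nat.le_succ n)
    obtain ⟨K, hK⟩ := Sylow.exists_subgroup_card_pow_prime p hdvd
    set K' : Subgroup G := K.map H.subtype with hK'def
    have hK'card : Nat.card K' = p ^ n := by
      rw [← hK]
      exact (Nat.card_congr (K.equivMapOfInjective H.subtype H.subtype_injective).toEquiv).symm
    have hK'le : K' ≤ H := Subgroup.map_subtype_le K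
    have hK'lt : K' < H := lt_of_le_of_ne hK'le (by
      intro h
      rw [h, hH] at hK'card
      exact absurd (Nat.pow_right_injective hp.two_le hK'card) (by omega))
    calc ((n + 1 : ℕ) : ℕ∞) = (n : ℕ∞) + 1 := by push_cast; ring
      _ ≤ Order.height K' + 1 := by gcongr; exact ih K' hK'card
      _ ≤ ⨆ L < H, Order.height L + 1 := le_iSup₂_of_le K' hK'lt le_rfl
      _ = Order.height H := (Order.height_eq_iSup_lt_height H).symm

/-- In a finite `p`-group, the height of a subgroup of order `p ^ n` is `n`. -/
private lemma height_eq_of_card_eq {p : ℕ} (hp : p.Prime) {G : Type*} [Group G] [Finite G]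
    (hG : IsPGroup p G) (n : ℕ) (H : Subgroup G) (hH : Nat.card H = p ^ n) :
    Order.height H = (n : ℕ∞) := by
  refine le_antisymm ?_ (le_height_of_card_eq hp hG n H hH)
  have := Order.height_le_height_apply_of_strictMono _ (exponent_strictMono hp hG) H
  rw [Order.height_nat] at this
  refine this.trans ?_
  simp [hH, Nat.Prime.factorization_pow hp]

/-- An order isomorphism of subgroup lattices of finite `p`-groups preserves subgroup order. -/
private lemma card_apply_eq {p : ℕ} (hp : p.Prime) {G₁ G₂ : Type*} [Group G₁] [Group G₂]
    [Finite G₁] [Finite G₂] (hG₁ : IsPGroup p G₁) (hG₂ : IsPGroup p G₂)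
    (f : Subgroup G₁ ≃o Subgroup G₂) (H : Subgroup G₁) :
    Nat.card (f H) = Nat.card H := by
  have : Fact p.Prime := ⟨hp⟩
  obtain ⟨a, ha⟩ := IsPGroup.iff_card.mp (hG₁.to_subgroup H)
  obtain ⟨b, hb⟩ := IsPGroup.iff_card.mp (hG₂.to_subgroup (f H))
  have h1 := height_eq_of_card_eq hp hG₁ a H ha
  have h2 := height_eq_of_card_eq hp hG₂ b (f H) hb
  rw [Order.height_orderIso f H, h1] at h2
  rw [ha, hb, Nat.cast_inj.mp h2]

/-- If two finite `p`-groups of the same order have isomorphic subgroup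
lattices, then they have the same number of subgroups of each order, i.e. the same group zeta
function. -/
theorem zeta_eq_of_subgroup_lattice_iso (p : ℕ) (hp : p.Prime)
    (G₁ G₂ : Type*) [Group G₁] [Group G₂] [Finite G₁] [Finite G₂]
    (hG₁ : IsPGroup p G₁) (hG₂ : IsPGroup p G₂)
    (hcard : Nat.card G₁ = Nat.card G₂)
    (hlat : Nonempty (Subgroup G₁ ≃o Subgroup G₂)) :
    ∀ N : ℕ, 1 ≤ N →
      Nat.card {H : Subgroup G₁ // Nat.card H = N}
        = Nat.card {H : Subgroup G₂ // Nat.card H = N} := by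
  obtain ⟨f⟩ := hlat
  intro N _
  refine Nat.card_congr ⟨fun H => ⟨f H.1, by rw [card_apply_eq hp hG₁ hG₂ f H.1, H.2]⟩,
    fun H => ⟨f.symm H.1, ?_⟩, fun H => by simp, fun H => by simp⟩
  have := card_apply_eq hp hG₁ hG₂ f (f.symm H.1)
  rw [f.apply_symm_apply] at this
  rw [← this]; exact H.2
end

section
/- Let n ≥ 2 and let k be an odd natural number. Let j be an integer with 1 ≤ j ≤ n − 1 and let r ≥ 0. Set u := k^{2^{n−j}} and S := Σ_{ν = 0}^{2^j − 1} u^ν. Then the cardinality of {x : ZMod (2^r) | (S : ZMod (2^r)) * x = 0} equals 2^{min(r, j)}. In particular, this cardinality does not depend on k. -/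
open Finset

lemma sum_range_double (u a : ℕ) : ∑ ν ∈ Finset.range (2 * a), u ^ ν
    = (∑ ν ∈ Finset.range a, u ^ ν) * (1 + u ^ a) := by
  rw [two_mul, Finset.sum_range_add]
  simp only [pow_add, ← Finset.mul_sum]
  ring

lemma geom_val (u : ℕ) (hu : u % 4 = 1) (j : ℕ) :
    ∃ m, Odd m ∧ ∑ ν ∈ Finset.range (2 ^ j), u ^ ν = 2 ^ j * m := by
  induction j with
  | zero => exact ⟨1, odd_one, by simp⟩
  | succ j ih =>
    obtain ⟨m, hm, hsum⟩ := ih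
    have hue : u ^ 2 ^ j % 4 = 1 := by
      rw [Nat.pow_mod, hu, Nat.one_pow, Nat.one_mod_eq_one.mpr (by norm_num)]
    obtain ⟨q, hq⟩ : ∃ q, u ^ 2 ^ j = 4 * q + 1 := ⟨u ^ 2 ^ j / 4, by omega⟩
    refine ⟨m * (2 * q + 1), hm.mul (by exact ⟨q, by ring⟩), ?_⟩
    rw [pow_succ, mul_comm (2 ^ j) 2, sum_range_double, hsum, hq]
    ring

lemma card_ker_mul (N a : ℕ) (hN : N ≠ 0) :
    Nat.card {x : ZMod N | ((a : ℕ) : ZMod N) * x = 0} = Nat.gcd N a := by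
  haveI : NeZero N := ⟨hN⟩
  set f : ZMod N →+ ZMod N := AddMonoidHom.mulLeft ((a : ℕ) : ZMod N)
  have hker : {x : ZMod N | ((a : ℕ) : ZMod N) * x = 0} = (f.ker : Set (ZMod N)) := rfl
  have hrange : f.range = AddSubgroup.zmultiples ((a : ℕ) : ZMod N) := by
    ext x
    constructor
    · rintro ⟨y, rfl⟩
      refine ⟨(y.val : ℤ), ?_⟩
      simp [f, zsmul_eq_mul, mul_comm]
    · rintro ⟨z, rfl⟩
      exact ⟨(z : ZMod N), by simp [f, zsmul_eq_mul, mul_comm]⟩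
  have h1 : Nat.card (ZMod N) = Nat.card (ZMod N ⧸ f.ker) * Nat.card f.ker :=
    AddSubgroup.card_eq_card_quotient_mul_card_addSubgroup f.ker
  have h2 : Nat.card (ZMod N ⧸ f.ker) = Nat.card f.range :=
    Nat.card_congr (QuotientAddGroup.quotientKerEquivRange f).toEquiv
  have h3 : Nat.card f.range = N / Nat.gcd N a := by
    rw [hrange, Nat.card_zmultiples, ZMod.addOrderOf_coe a hN]
  have hcardN : Nat.card (ZMod N) = N := Nat.card_zmod N
  have hgdvd : Nat.gcd N a ∣ N := Nat.gcd_dvd_left N a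
  have hgpos : 0 < Nat.gcd N a := Nat.gcd_pos_of_pos_left a (Nat.pos_of_ne_zero hN)
  have hdivpos : 0 < N / Nat.gcd N a := Nat.div_pos (Nat.le_of_dvd (Nat.pos_of_ne_zero hN) hgdvd) hgpos
  rw [hker]
  have h1' := h1
  rw [hcardN, h2, h3] at h1'
  have hNg : N = (N / Nat.gcd N a) * Nat.gcd N a := (Nat.div_mul_cancel hgdvd).symm
  have : (N / Nat.gcd N a) * Nat.card f.ker = (N / Nat.gcd N a) * Nat.gcd N a := by omega
  exact Nat.eq_of_mul_eq_mul_left hdivpos this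

/-- For `n ≥ 2`, `k` odd, `1 ≤ j ≤ n − 1` and `u = k^{2^{n−j}}`, the kernel
of multiplication by `S = Σ_{ν < 2^j} u^ν` on `ZMod (2^r)` has cardinality `2^{min(r,j)}`;
in particular it does not depend on `k`. -/
theorem card_ker_norm_small_j (n k j r : ℕ) (hn : 2 ≤ n) (hk : Odd k)
    (hj1 : 1 ≤ j) (hj2 : j ≤ n - 1) :
    Nat.card {x : ZMod (2 ^ r) |
        ((∑ ν ∈ Finset.range (2 ^ j), (k ^ (2 ^ (n - j))) ^ ν : ℕ) : ZMod (2 ^ r)) * x = 0}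
      = 2 ^ min r j := by
  set u := k ^ 2 ^ (n - j) with hu
  have hnj : 1 ≤ n - j := by omega
  have hu4 : u % 4 = 1 := by
    -- u = (k^(2^(n-j-1)))^2, square of odd
    have he : n - j = (n - j - 1) + 1 := by omega
    have : u = (k ^ 2 ^ (n - j - 1)) ^ 2 := by
      rw [hu, he, pow_succ, pow_mul]
      simp
    obtain ⟨t, ht⟩ := hk.pow (n := 2 ^ (n - j - 1))
    rw [this, ht]
    have : (2 * t + 1) ^ 2 = 4 * (t * t + t) + 1 := by ring
    omega
  obtain ⟨m, hm, hsum⟩ := geom_val u hu4 j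
  rw [hsum, card_ker_mul _ _ (by positivity)]
  have h2m : Nat.Coprime 2 m := (Nat.Prime.coprime_iff_not_dvd Nat.prime_two).mpr
    (Nat.two_dvd_ne_zero.mpr (Nat.odd_iff.mp hm))
  have hcop : Nat.Coprime m (2 ^ r) := Nat.Coprime.pow_right r h2m.symm
  rw [hcop.gcd_mul_right_cancel_right (2 ^ j)]
  rcases le_total r j with h | h
  · rw [Nat.gcd_eq_left (pow_dvd_pow 2 h), min_eq_left h]
  · rw [Nat.gcd_eq_right (pow_dvd_pow 2 h), min_eq_right h]
end
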